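/- arXiv:1611.01937 — 10 statements merged into one kernel-verified Lean document; each statement's English description precedes it below -/
import Mathlib

section
/- A ring R is right semi-hereditary if and only if every finitely generated submodule of every projective right R-module is projective. -/
open MulOpposite

section Defs

variable (R : Type*) [Ring R]

/-- The right annihilator of an element of a right `R`-module (a module over `Rᵐᵒᵖ`),
as a right ideal of `R`. -/
def RightAnn (M : Type*) [AddCommGroup M] [Module Rᵐᵒᵖ M] (x : M) : Submodule Rᵐᵒᵖ R where
  carrier := {r : R | op r • x = 0}
  zero_mem' := by simp
  add_mem' := by
    intro a b ha hb
    simp only [Set.mem_setOf_eq] at *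
    rw [op_add, add_smul, ha, hb, add_zero]
  smul_mem' := by
    intro c a ha
    simp only [Set.mem_setOf_eq] at *
    have h1 : c • a = a * unop c := rfl
    rw [h1, op_mul, op_unop, mul_smul, ha, smul_zero]

/-- The right annihilator of a subset of `R`, as a set. -/
def rightAnnSet (A : Set R) : Set R := {r : R | ∀ a ∈ A, a * r = 0}

/-- The left annihilator of a subset of `R`, as a set. -/
def leftAnnSet (A : Set R) : Set R := {r : R | ∀ a ∈ A, r * a = 0}

/-- A submodule is essential if it intersects every nonzero submodule nontrivially. -/
def IsEssentialSubmodule {A : Type*} [Ring A] {M : Type*} [AddCommGroup M] [Module A M]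
    (U : Submodule A M) : Prop :=
  ∀ V : Submodule A M, U ⊓ V = ⊥ → V = ⊥

/-- A right `R`-module is non-singular if its singular submodule is zero, i.e. no
nonzero element has essential right annihilator. -/
def IsNonsingularMod (M : Type*) [AddCommGroup M] [Module Rᵐᵒᵖ M] : Prop :=
  ∀ x : M, IsEssentialSubmodule (RightAnn R M x) → x = 0

/-- A right `R`-module is singular if every element has essential right annihilator. -/
def IsSingularMod (M : Type*) [AddCommGroup M] [Module Rᵐᵒᵖ M] : Prop :=
  ∀ x : M, IsEssentialSubmodule (RightAnn R M x)

/-- Hattori torsion-freeness for right `R`-modules. -/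
def HattoriTorsionFree (M : Type*) [AddCommGroup M] [Module Rᵐᵒᵖ M] : Prop :=
  ∀ (x : M) (r : R), op r • x = 0 →
    ∃ (k : ℕ) (xs : Fin k → M) (rs : Fin k → R),
      x = ∑ i, op (rs i) • xs i ∧ ∀ i, rs i * r = 0

/-- A ring is torsion-free if every finitely generated right ideal is a torsion-free
right `R`-module. -/
def IsTorsionFreeRing : Prop :=
  ∀ I : Submodule Rᵐᵒᵖ R, I.FG → HattoriTorsionFree R I

/-- A ring is a right p.p.-ring if every principal right ideal is projective. -/
def IsRightPPRing : Prop :=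
  ∀ x : R, Module.Projective Rᵐᵒᵖ (Submodule.span Rᵐᵒᵖ ({x} : Set R))

/-- A ring is a left p.p.-ring if every principal left ideal is projective. -/
def IsLeftPPRing : Prop :=
  ∀ x : R, Module.Projective R (Submodule.span R ({x} : Set R))

/-- A ring is right semi-hereditary if every finitely generated right ideal is projective. -/
def IsRightSemihereditary : Prop :=
  ∀ I : Submodule Rᵐᵒᵖ R, I.FG → Module.Projective Rᵐᵒᵖ I

/-- `R` contains no infinite set of (nonzero, pairwise) orthogonal idempotents. -/
def NoInfiniteOrthogonalIdempotents : Prop :=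
  ∀ S : Set R, (∀ e ∈ S, e * e = e ∧ e ≠ 0) →
    (∀ e ∈ S, ∀ f ∈ S, e ≠ f → e * f = 0 ∧ f * e = 0) → S.Finite

/-- A ring is Baer if the right annihilator of every subset is generated, as a right
ideal, by an idempotent. -/
def IsBaerRing : Prop :=
  ∀ A : Set R, ∃ e : R, e * e = e ∧ rightAnnSet R A = {y : R | ∃ r : R, y = e * r}

/-- A ring is right Utumi if it is right non-singular and every S-closed right ideal
is a right annihilator. -/
def IsRightUtumi : Prop :=
  IsNonsingularMod R R ∧
    ∀ I : Submodule Rᵐᵒᵖ R, IsNonsingularMod R (R ⧸ I) →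
      ∃ A : Set R, (I : Set R) = rightAnnSet R A

/-- The left annihilator of an element of a left `R`-module, as a left ideal of `R`. -/
def LeftAnn (M : Type*) [AddCommGroup M] [Module R M] (x : M) : Submodule R R :=
  LinearMap.ker (LinearMap.toSpanSingleton R M x)

/-- A left `R`-module is non-singular if no nonzero element has essential left annihilator. -/
def IsLeftNonsingularMod (M : Type*) [AddCommGroup M] [Module R M] : Prop :=
  ∀ x : M, IsEssentialSubmodule (LeftAnn R M x) → x = 0

/-- A ring is left Utumi if it is left non-singular and every S-closed left ideal is a
left annihilator. -/
def IsLeftUtumi : Prop :=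
  IsLeftNonsingularMod R R ∧
    ∀ I : Submodule R R, IsLeftNonsingularMod R (R ⧸ I) →
      ∃ A : Set R, (I : Set R) = leftAnnSet R A

end Defs

universe u

section Aux

variable (A : Type u) [Ring A]

/-- The op linear equivalence `Rᵐᵒᵖ ≃ₗ[Rᵐᵒᵖ] R`. -/
def myOpEquiv (R : Type u) [Ring R] : Rᵐᵒᵖ ≃ₗ[Rᵐᵒᵖ] R where
  toFun := unop
  invFun := op
  left_inv := fun _ => rfl
  right_inv := fun _ => rfl
  map_add' := fun _ _ => rfl
  map_smul' := fun _ _ => rfl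

/-- Over a semi-hereditary ring, every f.g. submodule of a f.g. free module is
projective. -/
lemma aux_fin (hA : ∀ I : Submodule A A, I.FG → Module.Projective A I) :
    ∀ n : ℕ, ∀ N : Submodule A (Fin n → A), N.FG → Module.Projective A N := by
  intro n
  induction n with
  | zero =>
    intro N _
    have hsub : Subsingleton N := ⟨fun a b => Subtype.ext (Subsingleton.elim _ _)⟩
    have : Module.Free A N := Module.Free.of_subsingleton A N
    infer_instance
  | succ n ih =>
    intro N hN
    classical
    set π : (Fin (n + 1) → A) →ₗ[A] A := LinearMap.proj (Fin.last n) with hπ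
    set f : N →ₗ[A] A := π ∘ₗ N.subtype with hf
    have hIfg : (LinearMap.range f).FG := by
      have hr : LinearMap.range f = N.map π := by
        rw [hf, LinearMap.range_comp, Submodule.range_subtype]
      rw [hr]
      exact hN.map π
    have hIproj : Module.Projective A (LinearMap.range f) := hA _ hIfg
    set f' : N →ₗ[A] LinearMap.range f := f.rangeRestrict with hf'
    have hf'surj : Function.Surjective f' := f.surjective_rangeRestrict
    obtain ⟨h, hh⟩ := Module.projective_lifting_property f' LinearMap.id hf'surj
    have hhapp : ∀ y, f' (h y) = y := fun y => congrArg (fun g => g y) hh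
    set K := LinearMap.ker f' with hK
    have hmem : ∀ x : N, x - h (f' x) ∈ K := by
      intro x
      rw [hK, LinearMap.mem_ker, map_sub, hhapp, sub_self]
    set r : N →ₗ[A] K := LinearMap.codRestrict K (LinearMap.id - h ∘ₗ f') hmem with hr
    set i : N →ₗ[A] (K × LinearMap.range f) := r.prod f' with hi
    set σ : (K × LinearMap.range f) →ₗ[A] N := LinearMap.coprod K.subtype h with hσ
    have hsi : σ ∘ₗ i = LinearMap.id := by
      ext x
      simp [hσ, hi, hr, sub_add_cancel]
    -- `K` is finitely generated
    haveI : Module.Finite A N := Module.Finite.iff_fg.mpr hN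
    have hrsurj : Function.Surjective r := by
      intro k
      refine ⟨(k : N), Subtype.ext ?_⟩
      have hk0 : f' (k : N) = 0 := k.2
      simp [hr, hk0]
    haveI hKfin : Module.Finite A K := Module.Finite.of_surjective r hrsurj
    -- `K` embeds into `Fin n → A`
    set ρ : (Fin (n + 1) → A) →ₗ[A] (Fin n → A) := LinearMap.funLeft A A Fin.castSucc with hρ
    set φ : K →ₗ[A] (Fin n → A) := ρ ∘ₗ (N.subtype ∘ₗ K.subtype) with hφdef
    have hlast : ∀ x : K, ((x : N) : Fin (n + 1) → A) (Fin.last n) = 0 := by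
      intro x
      have hx : (x : N) ∈ LinearMap.ker f := by
        rw [← LinearMap.ker_rangeRestrict]
        exact x.2
      have : f (x : N) = 0 := LinearMap.mem_ker.mp hx
      simpa [hf, hπ] using this
    have hφ : Function.Injective φ := by
      intro x y hxy
      apply Subtype.ext
      apply Subtype.ext
      funext j
      refine Fin.lastCases ?_ ?_ j
      · rw [hlast x, hlast y]
      · intro i
        have := congrFun hxy i
        simpa [hφdef, hρ, LinearMap.funLeft_apply] using this
    have hN'fg : (LinearMap.range φ).FG := by
      haveI : Module.Finite A (LinearMap.range φ) :=
        Module.Finite.of_surjective φ.rangeRestrict φ.surjective_rangeRestrict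
      exact Module.Finite.iff_fg.mp this
    haveI hN'proj : Module.Projective A (LinearMap.range φ) := ih _ hN'fg
    haveI : Module.Projective A K :=
      Module.Projective.of_equiv (LinearEquiv.ofInjective φ hφ).symm
    haveI := hIproj
    exact Module.Projective.of_split i σ hsi

/-- Over a semi-hereditary ring, every f.g. submodule of a projective module is
projective. -/
lemma aux_main (hA : ∀ I : Submodule A A, I.FG → Module.Projective A I)
    (M : Type u) [AddCommGroup M] [Module A M] (hM : Module.Projective A M)
    (N : Submodule A M) (hN : N.FG) : Module.Projective A N := by
  classical
  obtain ⟨s, hs⟩ := hM.out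
  obtain ⟨T, hT⟩ := hN
  set t : Finset M := T.biUnion fun x => (s x).support with ht
  have hmap : Submodule.map s N ≤ Finsupp.supported A A (↑t : Set M) := by
    rw [← hT, Submodule.map_span, Submodule.span_le]
    rintro _ ⟨y, hy, rfl⟩
    rw [SetLike.mem_coe, Finsupp.mem_supported]
    intro m hm
    exact Finset.mem_coe.2 (Finset.mem_biUnion.2 ⟨y, hy, hm⟩)
  have hsub : ∀ x : N, (s ∘ₗ N.subtype) x ∈ Finsupp.supported A A (↑t : Set M) :=
    fun x => hmap ⟨(x : M), x.2, rfl⟩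
  set ψ : N →ₗ[A] Finsupp.supported A A (↑t : Set M) :=
    LinearMap.codRestrict _ (s ∘ₗ N.subtype) hsub with hψdef
  have hψ : Function.Injective ψ := by
    intro x y hxy
    apply Subtype.ext
    have h1 : s (x : M) = s (y : M) := congrArg Subtype.val hxy
    have h2 := congrArg (Finsupp.linearCombination A (id : M → M)) h1
    rwa [hs, hs] at h2
  haveI : Fintype ((↑t : Set M)) := FinsetCoe.fintype t
  set k := Fintype.card ((↑t : Set M)) with hk
  let E : Finsupp.supported A A (↑t : Set M) ≃ₗ[A] (Fin k → A) :=
    (Finsupp.supportedEquivFinsupp (↑t : Set M)) ≪≫ₗ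
      (Finsupp.linearEquivFunOnFinite A A _) ≪≫ₗ
        (LinearEquiv.funCongrLeft A A (Fintype.equivFin ((↑t : Set M))).symm)
  set χ : N →ₗ[A] (Fin k → A) := E.toLinearMap ∘ₗ ψ with hχdef
  have hχ : Function.Injective χ := fun x y hxy => hψ (E.injective hxy)
  haveI : Module.Finite A N := Module.Finite.iff_fg.mpr ⟨T, hT⟩
  have hfg : (LinearMap.range χ).FG := by
    haveI : Module.Finite A (LinearMap.range χ) :=
      Module.Finite.of_surjective χ.rangeRestrict χ.surjective_rangeRestrict
    exact Module.Finite.iff_fg.mp this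
  haveI := aux_fin A hA k _ hfg
  exact Module.Projective.of_equiv (LinearEquiv.ofInjective χ hχ).symm

end Aux

/-- A ring `R` is right semi-hereditary if and only if every finitely generated
submodule of every projective right `R`-module is projective. -/
theorem stmt_1 (R : Type u) [Ring R] :
    IsRightSemihereditary R ↔
      ∀ (M : Type u) [AddCommGroup M] [Module Rᵐᵒᵖ M], Module.Projective Rᵐᵒᵖ M →
        ∀ N : Submodule Rᵐᵒᵖ M, N.FG → Module.Projective Rᵐᵒᵖ N := by
  constructor
  · intro hR M _ _ hM N hN
    have hA : ∀ I : Submodule Rᵐᵒᵖ Rᵐᵒᵖ, I.FG → Module.Projective Rᵐᵒᵖ I := by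
      intro I hI
      let e := myOpEquiv R
      have h1 : (Submodule.map (e : Rᵐᵒᵖ →ₗ[Rᵐᵒᵖ] R) I).FG := hI.map _
      haveI := hR _ h1
      exact Module.Projective.of_equiv (e.submoduleMap I).symm
    exact aux_main Rᵐᵒᵖ hA M hM N hN
  · intro h I hI
    have hproj : Module.Projective Rᵐᵒᵖ R := Module.Projective.of_equiv (myOpEquiv R)
    exact h R hproj I hI
end

section
/- Let R be a right p.p.-ring which does not contain an infinite set of orthogonal idempotents. Then: (1) R is a left p.p.-ring; (2) for every subset A of R there is an idempotent e ∈ R with ann_r(A) = eR, and for every subset A of R there is an idempotent f ∈ R with ann_l(A) = Rf; (3) R satisfies both the ascending and descending chain conditions on right annihilators of subsets of R. -/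
open MulOpposite

section Aux

variable {R : Type*} [Ring R]

lemma ppAnn (hpp : IsRightPPRing R) (x : R) :
    ∃ e : R, e * e = e ∧ ∀ y : R, x * y = 0 ↔ e * y = y := by
  haveI := hpp x
  set P := Submodule.span Rᵐᵒᵖ ({x} : Set R) with hP
  have hmem : ∀ r : R, x * r ∈ P := fun r => by
    have := P.smul_mem (op r) (Submodule.mem_span_singleton_self x)
    rwa [op_smul_eq_mul] at this
  let f : R →ₗ[Rᵐᵒᵖ] P :=
    { toFun := fun r => ⟨x * r, hmem r⟩
      map_add' := fun a b => by apply Subtype.ext; show x * (a + b) = x * a + x * b; rw [mul_add]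
      map_smul' := fun c a => by
        apply Subtype.ext
        show x * (a * unop c) = (x * a) * unop c
        rw [mul_assoc] }
  have hsurj : Function.Surjective f := by
    rintro ⟨y, hy⟩
    rw [hP, Submodule.mem_span_singleton] at hy
    obtain ⟨a, ha⟩ := hy
    exact ⟨unop a, Subtype.ext (by show x * unop a = y; rw [← ha]; rfl)⟩
  obtain ⟨σ, hσ⟩ := Module.projective_lifting_property f LinearMap.id hsurj
  have hfσf : ∀ p : P, f (σ p) = p := fun p => by
    have := LinearMap.congr_fun hσ p
    simpa using this
  have hform : ∀ r : R, σ (f r) = σ (f 1) * r := by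
    intro r
    have h1 : (op r • (1:R)) = r := one_mul r
    conv_lhs => rw [← h1]
    rw [map_smul, map_smul, op_smul_eq_mul]
  have hgg : σ (f 1) * σ (f 1) = σ (f 1) := by
    rw [← hform (σ (f 1))]
    congr 1
    exact hfσf (f 1)
  have hx : ∀ r : R, x * (σ (f 1) * r) = x * r := by
    intro r
    have h2 := hfσf (f r)
    rw [hform r] at h2
    exact congrArg Subtype.val h2
  have hzero : ∀ y : R, x * y = 0 → σ (f 1) * y = 0 := by
    intro y hy
    rw [← hform y]
    have h3 : f y = 0 := Subtype.ext hy
    rw [h3, map_zero]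
  refine ⟨1 - σ (f 1), ?_, ?_⟩
  · have h5 : (1 - σ (f 1)) * (1 - σ (f 1)) = 1 - σ (f 1) - σ (f 1) + σ (f 1) * σ (f 1) := by
      noncomm_ring
    rw [h5, hgg]; abel
  · intro y
    constructor
    · intro hy
      rw [sub_mul, one_mul, hzero y hy, sub_zero]
    · intro hy
      have h0 : σ (f 1) * y = 0 := by
        have h4 := hy
        rw [sub_mul, one_mul] at h4
        exact sub_eq_self.mp h4
      rw [← hx y, h0, mul_zero]


lemma chainAll (h : ℕ → R) (hid : ∀ n, h n * h n = h n)
    (hcons : ∀ n, h n * h (n+1) = h (n+1) ∧ h (n+1) * h n = h (n+1)) :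
    ∀ n m, n ≤ m → h n * h m = h m ∧ h m * h n = h m := by
  intro n m hnm
  induction m, hnm using Nat.le_induction with
  | base => exact ⟨hid n, hid n⟩
  | succ m hm ih =>
      obtain ⟨ih1, ih2⟩ := ih
      obtain ⟨c1, c2⟩ := hcons m
      constructor
      · conv_lhs => rw [← c1, ← mul_assoc, ih1]
        exact c1
      · conv_lhs => rw [← c2, mul_assoc, ih2]
        exact c2

lemma noChain (hno : NoInfiniteOrthogonalIdempotents R) (h : ℕ → R)
    (hid : ∀ n, h n * h n = h n)
    (hcons : ∀ n, h n * h (n+1) = h (n+1) ∧ h (n+1) * h n = h (n+1))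
    (hne : ∀ n, h n ≠ h (n+1)) : False := by
  have hall := chainAll h hid hcons
  set d : ℕ → R := fun n => h n - h (n+1) with hd
  have hdid : ∀ n, d n * d n = d n := by
    intro n
    have h5 : d n * d n =
        h n * h n - h n * h (n+1) - h (n+1) * h n + h (n+1) * h (n+1) := by
      simp only [hd]; noncomm_ring
    rw [h5, hid, hid, (hcons n).1, (hcons n).2]
    simp only [hd]; abel
  have hdne : ∀ n, d n ≠ 0 := fun n hn => hne n (by
    have := sub_eq_zero.mp hn
    exact this)
  have horth : ∀ n m, n < m → d n * d m = 0 ∧ d m * d n = 0 := by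
    intro n m hnm
    have h1 := hall n m (le_of_lt hnm)
    have h2 := hall n (m+1) (by omega)
    have h3 := hall (n+1) m (by omega)
    have h4 := hall (n+1) (m+1) (by omega)
    constructor
    · have h5 : d n * d m =
          h n * h m - h n * h (m+1) - h (n+1) * h m + h (n+1) * h (m+1) := by
        simp only [hd]; noncomm_ring
      rw [h5, h1.1, h2.1, h3.1, h4.1]; abel
    · have h5 : d m * d n =
          h m * h n - h m * h (n+1) - h (m+1) * h n + h (m+1) * h (n+1) := by
        simp only [hd]; noncomm_ring
      rw [h5, h1.2, h3.2, h2.2, h4.2]; abel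
  have hinj : Function.Injective d := by
    intro n m hnm
    by_contra hne'
    rcases Nat.lt_or_ge n m with hlt | hge
    · have h6 := (horth n m hlt).1
      rw [hnm] at h6
      exact hdne m (by rw [← hdid m, h6])
    · have hlt : m < n := by omega
      have h6 := (horth m n hlt).1
      rw [hnm] at h6
      exact hdne m (by rw [← hdid m, h6])
  have hfin := hno (Set.range d)
    (by rintro e ⟨n, rfl⟩; exact ⟨hdid n, hdne n⟩)
    (by
      rintro e ⟨n, rfl⟩ g ⟨m, rfl⟩ hne'
      have hnm : n ≠ m := fun hh => hne' (by rw [hh])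
      rcases Nat.lt_or_ge n m with hlt | hge
      · exact ⟨(horth n m hlt).1, (horth n m hlt).2⟩
      · have hlt : m < n := by omega
        exact ⟨(horth m n hlt).2, (horth m n hlt).1⟩)
  exact (Set.infinite_range_of_injective hinj) hfin

lemma descChain (hno : NoInfiniteOrthogonalIdempotents R) (e : ℕ → R)
    (hid : ∀ n, e n * e n = e n) (I : ℕ → Set R)
    (hIe : ∀ n, I n = {y | e n * y = y})
    (hmono : ∀ n, I (n+1) ⊆ I n)
    (hne : ∀ n, I (n+1) ≠ I n) : False := by
  let h : ℕ → R := fun n => Nat.rec (motive := fun _ => R) (e 0) (fun k ih => e (k+1) * ih) n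
  have hhs : ∀ n, h (n+1) = e (n+1) * h n := fun n => rfl
  have hinv : ∀ n, h n * h n = h n ∧ I n = {y | h n * y = y} := by
    intro n
    induction n with
    | zero => exact ⟨hid 0, hIe 0⟩
    | succ n ih =>
      obtain ⟨ih1, ih2⟩ := ih
      have he' : e (n+1) ∈ I (n+1) := by rw [hIe (n+1)]; exact hid (n+1)
      have hmem : h n * e (n+1) = e (n+1) := by
        have h7 := hmono n he'
        rw [ih2] at h7; exact h7
      constructor
      · rw [hhs, mul_assoc, ← mul_assoc (h n), hmem, ← mul_assoc, hid]
      · rw [hIe (n+1)]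
        ext y
        simp only [Set.mem_setOf_eq, hhs]
        constructor
        · intro hy
          have hyI : y ∈ I (n+1) := by rw [hIe (n+1)]; exact hy
          have hyn : h n * y = y := by
            have h7 := hmono n hyI
            rw [ih2] at h7; exact h7
          rw [mul_assoc, hyn]; exact hy
        · intro hy
          have h8 : e (n+1) * (e (n+1) * h n * y) = e (n+1) * h n * y := by
            rw [← mul_assoc, ← mul_assoc, hid]
          rw [hy] at h8
          exact h8
  have hcons : ∀ n, h n * h (n+1) = h (n+1) ∧ h (n+1) * h n = h (n+1) := by
    intro n
    have he' : e (n+1) ∈ I (n+1) := by rw [hIe (n+1)]; exact hid (n+1)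
    have hmem : h n * e (n+1) = e (n+1) := by
      have h7 := hmono n he'
      rw [(hinv n).2] at h7; exact h7
    constructor
    · rw [hhs, ← mul_assoc, hmem]
    · rw [hhs, mul_assoc, (hinv n).1]
  have hne' : ∀ n, h n ≠ h (n+1) := by
    intro n hn
    apply hne n
    rw [(hinv (n+1)).2, (hinv n).2, hn]
  exact noChain hno h (fun n => (hinv n).1) hcons hne'

lemma ascChain (hno : NoInfiniteOrthogonalIdempotents R) (e : ℕ → R)
    (hid : ∀ n, e n * e n = e n) (I : ℕ → Set R)
    (hIe : ∀ n, I n = {y | e n * y = y})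
    (hmono : ∀ n, I n ⊆ I (n+1))
    (hne : ∀ n, I (n+1) ≠ I n) : False := by
  let h : ℕ → R := fun n => Nat.rec (motive := fun _ => R) (e 0)
    (fun k ih => ih + e (k+1) - ih * e (k+1)) n
  have hhs : ∀ n, h (n+1) = h n + e (n+1) - h n * e (n+1) := fun n => rfl
  have hinv : ∀ n, h n * h n = h n ∧ I n = {y | h n * y = y} := by
    intro n
    induction n with
    | zero => exact ⟨hid 0, hIe 0⟩
    | succ n ih =>
      obtain ⟨ih1, ih2⟩ := ih
      have hh' : h n ∈ I n := by rw [ih2]; exact ih1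
      have hmem : e (n+1) * h n = h n := by
        have h7 := hmono n hh'
        rw [hIe (n+1)] at h7; exact h7
      have heh' : e (n+1) * h (n+1) = h (n+1) := by
        rw [hhs]
        have h9 : e (n+1) * (h n + e (n+1) - h n * e (n+1)) =
            e (n+1) * h n + e (n+1) * e (n+1) - e (n+1) * h n * e (n+1) := by
          noncomm_ring
        rw [h9, hmem, hid]
      have h'e : h (n+1) * e (n+1) = e (n+1) := by
        rw [hhs]
        have h9 : (h n + e (n+1) - h n * e (n+1)) * e (n+1) =
            h n * e (n+1) + e (n+1) * e (n+1) - h n * (e (n+1) * e (n+1)) := by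
          noncomm_ring
        rw [h9, hid]
        abel
      have hidem : h (n+1) * h (n+1) = h (n+1) := by
        conv_lhs => rw [hhs]
        have h9 : (h n + e (n+1) - h n * e (n+1)) * h (n+1) =
            h n * h (n+1) + e (n+1) * h (n+1) - h n * (e (n+1) * h (n+1)) := by
          noncomm_ring
        rw [h9, heh']
        have h10 : h n * h (n+1) = h n := by
          conv_lhs => rw [hhs]
          have h11 : h n * (h n + e (n+1) - h n * e (n+1)) =
              h n * h n + h n * e (n+1) - (h n * h n) * e (n+1) := by
            noncomm_ring
          rw [h11, ih1]; abel
        rw [h10]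
        abel
      refine ⟨hidem, ?_⟩
      rw [hIe (n+1)]
      ext y
      simp only [Set.mem_setOf_eq]
      constructor
      · intro hy
        calc h (n+1) * y = h (n+1) * (e (n+1) * y) := by rw [hy]
        _ = (h (n+1) * e (n+1)) * y := by rw [mul_assoc]
        _ = e (n+1) * y := by rw [h'e]
        _ = y := hy
      · intro hy
        calc e (n+1) * y = e (n+1) * (h (n+1) * y) := by rw [hy]
        _ = (e (n+1) * h (n+1)) * y := by rw [mul_assoc]
        _ = h (n+1) * y := by rw [heh']
        _ = y := hy
  have hcons : ∀ n, h n * h (n+1) = h n ∧ h (n+1) * h n = h n := by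
    intro n
    have hh' : h n ∈ I n := by rw [(hinv n).2]; exact (hinv n).1
    have hmem : e (n+1) * h n = h n := by
      have h7 := hmono n hh'
      rw [hIe (n+1)] at h7; exact h7
    constructor
    · rw [hhs]
      have h11 : h n * (h n + e (n+1) - h n * e (n+1)) =
          h n * h n + h n * e (n+1) - (h n * h n) * e (n+1) := by
        noncomm_ring
      rw [h11, (hinv n).1]; abel
    · rw [hhs]
      have h11 : (h n + e (n+1) - h n * e (n+1)) * h n =
          h n * h n + e (n+1) * h n - h n * (e (n+1) * h n) := by
        noncomm_ring
      rw [h11, hmem, (hinv n).1]; abel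
  -- complements
  let c : ℕ → R := fun n => 1 - h n
  have hcid : ∀ n, c n * c n = c n := by
    intro n
    have h11 : (1 - h n) * (1 - h n) = 1 - h n - h n + h n * h n := by noncomm_ring
    show (1 - h n) * (1 - h n) = 1 - h n
    rw [h11, (hinv n).1]; abel
  have hccons : ∀ n, c n * c (n+1) = c (n+1) ∧ c (n+1) * c n = c (n+1) := by
    intro n
    constructor
    · show (1 - h n) * (1 - h (n+1)) = 1 - h (n+1)
      have h11 : (1 - h n) * (1 - h (n+1)) = 1 - h (n+1) - h n + h n * h (n+1) := by
        noncomm_ring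
      rw [h11, (hcons n).1]; abel
    · show (1 - h (n+1)) * (1 - h n) = 1 - h (n+1)
      have h11 : (1 - h (n+1)) * (1 - h n) = 1 - h (n+1) - h n + h (n+1) * h n := by
        noncomm_ring
      rw [h11, (hcons n).2]; abel
  have hcne : ∀ n, c n ≠ c (n+1) := by
    intro n hn
    have h12 : h n = h (n+1) := by
      have := sub_right_injective (G := R) hn
      exact this
    apply hne n
    rw [(hinv (n+1)).2, (hinv n).2, h12]
  exact noChain hno c hcid hccons hcne


lemma finAnn (hpp : IsRightPPRing R) (F : Finset R) :
    ∃ e : R, e * e = e ∧ ∀ y : R, (∀ a ∈ F, a * y = 0) ↔ e * y = y := by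
  classical
  induction F using Finset.induction_on with
  | empty =>
      exact ⟨1, one_mul 1, fun y =>
        ⟨fun _ => one_mul y, fun _ a ha => absurd ha (Finset.notMem_empty a)⟩⟩
  | @insert b F hb ih =>
      obtain ⟨e, he, hE⟩ := ih
      obtain ⟨f, hf, hF⟩ := ppAnn hpp (b * e)
      have hbef : b * e * f = 0 := (hF f).mpr hf
      have hiff : ∀ y : R, (∀ a ∈ insert b F, a * y = 0) ↔ (e * f) * y = y := by
        intro y
        constructor
        · intro hy
          have hby : b * y = 0 := hy b (Finset.mem_insert_self b F)
          have hey : e * y = y := (hE y).mp (fun a ha => hy a (Finset.mem_insert_of_mem ha))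
          have hbey : b * e * y = 0 := by rw [mul_assoc, hey]; exact hby
          have hfy : f * y = y := (hF y).mp hbey
          rw [mul_assoc, hfy]
          exact hey
        · intro hgy
          have hey : e * y = y := by
            have h1 : e * ((e * f) * y) = (e * f) * y := by
              rw [← mul_assoc, ← mul_assoc, he]
            rw [hgy] at h1
            exact h1
          intro a ha
          rcases Finset.mem_insert.mp ha with rfl | haF
          · conv_lhs => rw [← hgy]
            rw [← mul_assoc, ← mul_assoc, hbef, zero_mul]
          · exact (hE y).mpr hey a haF
      have hgmem : ∀ a ∈ insert b F, a * (e * f) = 0 := by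
        intro a ha
        rcases Finset.mem_insert.mp ha with rfl | haF
        · rw [← mul_assoc]; exact hbef
        · rw [← mul_assoc, (hE e).mpr he a haF, zero_mul]
      exact ⟨e * f, (hiff (e * f)).mp hgmem, hiff⟩

lemma baer (hpp : IsRightPPRing R) (hno : NoInfiniteOrthogonalIdempotents R) (A : Set R) :
    ∃ e : R, e * e = e ∧ rightAnnSet R A = {y : R | e * y = y} := by
  classical
  set ann : Finset R → Set R := fun F => {y | ∀ a ∈ F, a * y = 0} with hann
  have hsub : ∀ (a : R) (F : Finset R), ann (insert a F) ⊆ ann F := by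
    intro a F y hy b hbF
    exact hy b (Finset.mem_insert_of_mem hbF)
  have hmin : ∃ F : Finset R, ↑F ⊆ A ∧ ∀ a ∈ A, ann (insert a F) = ann F := by
    by_contra hcon
    push_neg at hcon
    choose g hg1 hg2 using hcon
    let step : {F : Finset R // ↑F ⊆ A} → {F : Finset R // ↑F ⊆ A} :=
      fun p => ⟨insert (g p.1 p.2) p.1, by
        rw [Finset.coe_insert]
        exact Set.insert_subset (hg1 p.1 p.2) p.2⟩
    let seq : ℕ → {F : Finset R // ↑F ⊆ A} :=
      fun n => step^[n] ⟨∅, by simp⟩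
    have hseq : ∀ n, seq (n+1) = step (seq n) := fun n =>
      Function.iterate_succ_apply' step n _
    let I : ℕ → Set R := fun n => ann (seq n).1
    have hmono : ∀ n, I (n+1) ⊆ I n := by
      intro n
      show ann (seq (n+1)).1 ⊆ ann (seq n).1
      rw [hseq n]
      exact hsub _ _
    have hne : ∀ n, I (n+1) ≠ I n := by
      intro n
      show ann (seq (n+1)).1 ≠ ann (seq n).1
      rw [hseq n]
      exact hg2 (seq n).1 (seq n).2
    have hJ : ∀ n, ∃ e : R, e * e = e ∧ I n = {y : R | e * y = y} := by
      intro n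
      obtain ⟨e, he, hE⟩ := finAnn hpp (seq n).1
      exact ⟨e, he, by ext y; exact hE y⟩
    choose e he1 he2 using hJ
    exact descChain hno e he1 I he2 hmono hne
  obtain ⟨F₀, hF₀A, hF₀⟩ := hmin
  obtain ⟨e, he, hE⟩ := finAnn hpp F₀
  refine ⟨e, he, ?_⟩
  ext y
  simp only [Set.mem_setOf_eq]
  rw [← hE y]
  constructor
  · intro hy a haF
    exact hy a (hF₀A haF)
  · intro hy a haA
    have h1 : y ∈ ann F₀ := hy
    rw [← hF₀ a haA] at h1
    exact h1 a (Finset.mem_insert_self a F₀)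

lemma leftBaer (hpp : IsRightPPRing R) (hno : NoInfiniteOrthogonalIdempotents R) (A : Set R) :
    ∃ f : R, f * f = f ∧ leftAnnSet R A = {y : R | ∃ r : R, y = r * f} := by
  obtain ⟨e, he, hE⟩ := baer hpp hno (leftAnnSet R A)
  have heB : e ∈ rightAnnSet R (leftAnnSet R A) := by rw [hE]; exact he
  have hkey : ∀ y : R, y ∈ leftAnnSet R A ↔ y * e = 0 := by
    intro y
    constructor
    · intro hy
      exact heB y hy
    · intro hy a haA
      have haB : a ∈ rightAnnSet R (leftAnnSet R A) := fun z hz => hz a haA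
      have hea : e * a = a := by rw [hE] at haB; exact haB
      rw [← hea, ← mul_assoc, hy, zero_mul]
  refine ⟨1 - e, ?_, ?_⟩
  · have h5 : (1 - e) * (1 - e) = 1 - e - e + e * e := by noncomm_ring
    rw [h5, he]; abel
  · ext y
    rw [Set.mem_setOf_eq, hkey y]
    constructor
    · intro hy
      refine ⟨y, ?_⟩
      rw [mul_sub, mul_one, hy, sub_zero]
    · rintro ⟨r, rfl⟩
      have h5 : r * (1 - e) * e = r * (e - e * e) := by noncomm_ring
      rw [h5, he, sub_self, mul_zero]

lemma leftPP (hpp : IsRightPPRing R) (hno : NoInfiniteOrthogonalIdempotents R) :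
    IsLeftPPRing R := by
  intro x
  obtain ⟨f, hf, hFx⟩ := leftBaer hpp hno ({x} : Set R)
  have hmemL : ∀ y : R, y ∈ leftAnnSet R ({x} : Set R) ↔ y * x = 0 := by
    intro y
    constructor
    · intro hy; exact hy x rfl
    · intro hy a ha
      rw [Set.mem_singleton_iff] at ha
      rw [ha]; exact hy
  have hfx : f * x = 0 := by
    have h1 : f ∈ leftAnnSet R ({x} : Set R) := by
      rw [hFx]; exact ⟨f, hf.symm⟩
    exact (hmemL f).mp h1
  have hfix : ∀ y : R, y * x = 0 → y * f = y := by
    intro y hy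
    have h1 : y ∈ leftAnnSet R ({x} : Set R) := (hmemL y).mpr hy
    rw [hFx] at h1
    obtain ⟨r, rfl⟩ := h1
    rw [mul_assoc, hf]
  have h1f : (1 - f) * (1 - f) = 1 - f := by
    have h5 : (1 - f) * (1 - f) = 1 - f - f + f * f := by noncomm_ring
    rw [h5, hf]; abel
  have hmemx : ∀ z : R, z * x ∈ Submodule.span R ({x} : Set R) := fun z => by
    have := (Submodule.span R ({x} : Set R)).smul_mem z (Submodule.mem_span_singleton_self x)
    rwa [smul_eq_mul] at this
  have hmem1f : ∀ z : R, z * (1 - f) ∈ Submodule.span R ({1 - f} : Set R) := fun z => by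
    have := (Submodule.span R ({1 - f} : Set R)).smul_mem z
      (Submodule.mem_span_singleton_self (1 - f))
    rwa [smul_eq_mul] at this
  have hann1f : ∀ z : R, z ∈ Submodule.span R ({1 - f} : Set R) → z * (1 - f) = z := by
    intro z hz
    rw [Submodule.mem_span_singleton] at hz
    obtain ⟨c, hc⟩ := hz
    rw [← hc, smul_eq_mul, mul_assoc, h1f]
  let α : Submodule.span R ({1 - f} : Set R) →ₗ[R] Submodule.span R ({x} : Set R) :=
    { toFun := fun z => ⟨z.1 * x, hmemx z.1⟩
      map_add' := fun a b => by
        apply Subtype.ext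
        show (a.1 + b.1) * x = a.1 * x + b.1 * x
        rw [add_mul]
      map_smul' := fun c a => by
        apply Subtype.ext
        show (c * a.1) * x = c * (a.1 * x)
        rw [mul_assoc] }
  have hinj : Function.Injective α := by
    intro a b hab
    have h1 : (a.1 - b.1) * x = 0 := by
      have h2 : a.1 * x = b.1 * x := congrArg Subtype.val hab
      rw [sub_mul, h2, sub_self]
    have h2 : (a.1 - b.1) * f = a.1 - b.1 := hfix _ h1
    have h3 : (a.1 - b.1) * f = 0 := by
      have h4 : (a.1 - b.1) * (1 - f) = a.1 - b.1 := hann1f _ (sub_mem a.2 b.2)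
      have h5 : (a.1 - b.1) * (1 - f) = (a.1 - b.1) - (a.1 - b.1) * f := by noncomm_ring
      rw [h5] at h4
      have := sub_eq_self.mp h4
      exact this
    rw [h3] at h2
    exact Subtype.ext (sub_eq_zero.mp h2.symm)
  have hsurj : Function.Surjective α := by
    rintro ⟨y, hy⟩
    rw [Submodule.mem_span_singleton] at hy
    obtain ⟨c, hc⟩ := hy
    refine ⟨⟨c * (1 - f), hmem1f c⟩, ?_⟩
    apply Subtype.ext
    show (c * (1 - f)) * x = y
    rw [mul_assoc, sub_mul, one_mul, hfx, sub_zero, ← hc, smul_eq_mul]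
  let s : R →ₗ[R] Submodule.span R ({1 - f} : Set R) :=
    { toFun := fun r => ⟨r * (1 - f), hmem1f r⟩
      map_add' := fun a b => by
        apply Subtype.ext
        show (a + b) * (1 - f) = a * (1 - f) + b * (1 - f)
        rw [add_mul]
      map_smul' := fun c a => by
        apply Subtype.ext
        show (c * a) * (1 - f) = c * (a * (1 - f))
        rw [mul_assoc] }
  have hproj1 : Module.Projective R (Submodule.span R ({1 - f} : Set R)) := by
    apply Module.Projective.of_split (Submodule.span R ({1 - f} : Set R)).subtype s
    apply LinearMap.ext
    intro z
    apply Subtype.ext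
    show z.1 * (1 - f) = z.1
    exact hann1f z.1 z.2
  haveI := hproj1
  exact Module.Projective.of_equiv (LinearEquiv.ofBijective α ⟨hinj, hsurj⟩)

end Aux

/-- If `R` is a right p.p.-ring with no infinite set of orthogonal idempotents, then `R`
is a left p.p.-ring, every right (resp. left) annihilator of a subset is generated by an
idempotent, and `R` satisfies both chain conditions on right annihilators of subsets. -/
theorem stmt_4 (R : Type*) [Ring R] (hpp : IsRightPPRing R)
    (hno : NoInfiniteOrthogonalIdempotents R) :
    IsLeftPPRing R ∧
    (∀ A : Set R, ∃ e : R, e * e = e ∧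
        rightAnnSet R A = {y : R | ∃ r : R, y = e * r}) ∧
    (∀ A : Set R, ∃ f : R, f * f = f ∧
        leftAnnSet R A = {y : R | ∃ r : R, y = r * f}) ∧
    (∀ I : ℕ → Set R, (∀ n, ∃ A : Set R, I n = rightAnnSet R A) →
        (∀ n, I n ⊆ I (n + 1)) → ∃ N, ∀ n, N ≤ n → I n = I N) ∧
    (∀ I : ℕ → Set R, (∀ n, ∃ A : Set R, I n = rightAnnSet R A) →
        (∀ n, I (n + 1) ⊆ I n) → ∃ N, ∀ n, N ≤ n → I n = I N) := by
  refine ⟨leftPP hpp hno, ?_, leftBaer hpp hno, ?_, ?_⟩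
  · intro A
    obtain ⟨e, he, hE⟩ := baer hpp hno A
    refine ⟨e, he, ?_⟩
    rw [hE]
    ext y
    simp only [Set.mem_setOf_eq]
    constructor
    · intro hy; exact ⟨y, hy.symm⟩
    · rintro ⟨r, rfl⟩; rw [← mul_assoc, he]
  · intro I hann hmono
    by_contra hc
    push_neg at hc
    choose φf hφ1 hφ2 using hc
    let φ : ℕ → ℕ := fun k => φf^[k] 0
    have hφs : ∀ k, φ (k+1) = φf (φ k) := fun k => Function.iterate_succ_apply' φf k 0
    have hmono' : ∀ a b, a ≤ b → I a ⊆ I b := by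
      intro a b hab
      induction b, hab using Nat.le_induction with
      | base => exact subset_rfl
      | succ b hb ih => exact ih.trans (hmono b)
    have hJ : ∀ k, ∃ e : R, e * e = e ∧ I (φ k) = {y : R | e * y = y} := by
      intro k
      obtain ⟨A, hA⟩ := hann (φ k)
      obtain ⟨e, he, hE⟩ := baer hpp hno A
      exact ⟨e, he, by rw [hA, hE]⟩
    choose e he1 he2 using hJ
    refine ascChain hno e he1 (fun k => I (φ k)) he2 ?_ ?_
    · intro k
      show I (φ k) ⊆ I (φ (k+1))
      exact hmono' (φ k) (φ (k+1)) (by rw [hφs]; exact hφ1 (φ k))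
    · intro k
      show I (φ (k+1)) ≠ I (φ k)
      rw [hφs]
      exact hφ2 (φ k)
  · intro I hann hmono
    by_contra hc
    push_neg at hc
    choose φf hφ1 hφ2 using hc
    let φ : ℕ → ℕ := fun k => φf^[k] 0
    have hφs : ∀ k, φ (k+1) = φf (φ k) := fun k => Function.iterate_succ_apply' φf k 0
    have hmono' : ∀ a b, a ≤ b → I b ⊆ I a := by
      intro a b hab
      induction b, hab using Nat.le_induction with
      | base => exact subset_rfl
      | succ b hb ih => exact (hmono b).trans ih
    have hJ : ∀ k, ∃ e : R, e * e = e ∧ I (φ k) = {y : R | e * y = y} := by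
      intro k
      obtain ⟨A, hA⟩ := hann (φ k)
      obtain ⟨e, he, hE⟩ := baer hpp hno A
      exact ⟨e, he, by rw [hA, hE]⟩
    choose e he1 he2 using hJ
    refine descChain hno e he1 (fun k => I (φ k)) he2 ?_ ?_
    · intro k
      show I (φ (k+1)) ⊆ I (φ k)
      exact hmono' (φ k) (φ (k+1)) (by rw [hφs]; exact hφ1 (φ k))
    · intro k
      show I (φ (k+1)) ≠ I (φ k)
      rw [hφs]
      exact hφ2 (φ k)
end

section
/- The following are equivalent for a ring R: (a) R is a torsion-free ring; (b) for every s, r ∈ R, sr = 0 if and only if there exists u ∈ R such that s = su and ur = 0. -/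
open MulOpposite

/-- A ring `R` is torsion-free if and only if for all `s, r ∈ R`, `sr = 0` holds exactly
when there is a `u ∈ R` with `s = su` and `ur = 0`. -/
theorem stmt_5 (R : Type*) [Ring R] :
    IsTorsionFreeRing R ↔
      ∀ s r : R, (s * r = 0 ↔ ∃ u : R, s = s * u ∧ u * r = 0) := by
  constructor
  · intro hTF s r
    constructor
    · intro hsr
      have hfg : (Submodule.span Rᵐᵒᵖ ({s} : Set R)).FG := ⟨{s}, by simp⟩
      have hs : s ∈ Submodule.span Rᵐᵒᵖ ({s} : Set R) :=
        Submodule.mem_span_singleton_self s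
      obtain ⟨k, xs, rs, hx, hr⟩ := hTF _ hfg ⟨s, hs⟩ r (by
        ext
        simpa using hsr)
      choose a ha using fun i => (Submodule.mem_span_singleton.mp (xs i).2)
      refine ⟨∑ i, (unop (a i)) * rs i, ?_, ?_⟩
      · have h1 := congrArg Subtype.val hx
        simp only [Submodule.coe_sum, Submodule.coe_smul] at h1
        calc s = ∑ i, op (rs i) • ((xs i : R)) := h1
        _ = ∑ i, (xs i : R) * rs i := by simp [op_smul_eq_mul]
        _ = ∑ i, (s * unop (a i)) * rs i := by
            refine Finset.sum_congr rfl fun i _ => ?_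
            have := ha i
            rw [← this]
            rfl
        _ = s * ∑ i, unop (a i) * rs i := by
            rw [Finset.mul_sum]; simp [mul_assoc]
      · rw [Finset.sum_mul]
        refine Finset.sum_eq_zero fun i _ => ?_
        rw [mul_assoc, hr i, mul_zero]
    · rintro ⟨u, hsu, hur⟩
      rw [hsu, mul_assoc, hur, mul_zero]
  · intro h I _ x r hxr
    have hxr' : (x : R) * r = 0 := by
      have := congrArg Subtype.val hxr
      simpa [op_smul_eq_mul] using this
    obtain ⟨u, hsu, hur⟩ := (h (x : R) r).mp hxr'
    refine ⟨1, fun _ => x, fun _ => u, ?_, fun _ => hur⟩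
    rw [Finset.sum_const, Finset.card_univ, Fintype.card_fin, one_smul]
    ext
    simpa [op_smul_eq_mul] using hsu
end

section
/- A ring R is torsion-free if and only if every submodule of every torsion-free right R-module is torsion-free. -/
open MulOpposite

section Aux

variable {R : Type u} [Ring R]

/-- From torsion-freeness of the principal right ideal `aR`: if `a * r = 0` then
`a = a * b` for some `b` with `b * r = 0`. -/
lemma exists_right_unit_of_tf (hR : IsTorsionFreeRing R)
    (a r : R) (h : a * r = 0) : ∃ b : R, a * b = a ∧ b * r = 0 := by
  set I := Submodule.span Rᵐᵒᵖ ({a} : Set R)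
  have hFG : I.FG := ⟨{a}, by simp [I]⟩
  have ha : a ∈ I := Submodule.mem_span_singleton_self a
  obtain ⟨k, xs, rs, hsum, hann⟩ := hR I hFG ⟨a, ha⟩ r (by
    apply Subtype.ext
    show a * r = 0
    exact h)
  choose t ht using fun i => Submodule.mem_span_singleton.mp (xs i).2
  refine ⟨∑ i, unop (t i) * rs i, ?_, ?_⟩
  · have hc := congrArg Subtype.val hsum
    simp only [Submodule.coe_sum] at hc
    calc a * ∑ i, unop (t i) * rs i = ∑ i, a * unop (t i) * rs i := by
          rw [Finset.mul_sum]; simp [mul_assoc]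
      _ = ∑ i, (xs i : R) * rs i := by
          refine Finset.sum_congr rfl fun i _ => ?_
          have : (t i) • a = (xs i : R) := ht i
          rw [← this]; rfl
      _ = a := by rw [hc]; rfl
  · rw [Finset.sum_mul]
    simp [mul_assoc, hann]

/-- Finite families in the left annihilator of `r` admit a common right unit inside it. -/
lemma exists_common_right_unit_of_tf (hR : IsTorsionFreeRing R) (r : R) :
    ∀ (k : ℕ) (a : Fin k → R), (∀ i, a i * r = 0) →
      ∃ b : R, b * r = 0 ∧ ∀ i, a i * b = a i := by
  intro k
  induction k with
  | zero => exact fun a _ => ⟨0, by simp, fun i => i.elim0⟩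
  | succ n ih =>
    intro a ha
    obtain ⟨b₁, hb₁r, hb₁⟩ := ih (fun i => a i.castSucc) (fun i => ha i.castSucc)
    set c := a (Fin.last n) - a (Fin.last n) * b₁ with hc
    have hcr : c * r = 0 := by
      rw [hc, sub_mul, mul_assoc, hb₁r, mul_zero, ha, zero_sub, neg_zero]
    obtain ⟨b₂, hcb₂, hb₂r⟩ := exists_right_unit_of_tf hR c r hcr
    refine ⟨b₁ + b₂ - b₁ * b₂, ?_, ?_⟩
    · rw [sub_mul, add_mul, mul_assoc, hb₂r, hb₁r, mul_zero, zero_add, zero_sub, neg_zero]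
    · intro i
      induction i using Fin.lastCases with
      | last =>
        have h2 : a (Fin.last n) * (b₁ + b₂ - b₁ * b₂)
            = a (Fin.last n) * b₁ + c * b₂ := by
          rw [hc]; noncomm_ring
        rw [h2, hcb₂, hc]; noncomm_ring
      | cast j =>
        have h1 : a j.castSucc * b₁ = a j.castSucc := hb₁ j
        have h2 : a j.castSucc * (b₁ + b₂ - b₁ * b₂)
            = a j.castSucc * b₁ + a j.castSucc * b₂ - (a j.castSucc * b₁) * b₂ := by
          noncomm_ring
        rw [h2, h1]; noncomm_ring

end Aux

/-- A ring `R` is torsion-free if and only if every submodule of every torsion-free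
right `R`-module is torsion-free. -/
theorem stmt_6 (R : Type u) [Ring R] :
    IsTorsionFreeRing R ↔
      ∀ (M : Type u) [AddCommGroup M] [Module Rᵐᵒᵖ M], HattoriTorsionFree R M →
        ∀ N : Submodule Rᵐᵒᵖ M, HattoriTorsionFree R N := by
  constructor
  · intro hR M _ _ hM N x r hxr
    have hxr' : op r • (x : M) = 0 := by
      have := congrArg Subtype.val hxr
      simpa using this
    obtain ⟨k, xs, rs, hsum, hann⟩ := hM (x : M) r hxr'
    obtain ⟨b, hbr, hb⟩ := exists_common_right_unit_of_tf hR r k rs hann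
    refine ⟨1, fun _ => x, fun _ => b, ?_, fun _ => hbr⟩
    apply Subtype.ext
    have hxb : op b • (x : M) = (x : M) := by
      rw [hsum, Finset.smul_sum]
      refine Finset.sum_congr rfl fun i _ => ?_
      rw [smul_smul, ← op_mul, hb]
    simpa using hxb.symm
  · intro h I hFG
    have hRmod : HattoriTorsionFree R R := by
      intro x r hxr
      exact ⟨1, fun _ => 1, fun _ => x, by simp, fun _ => hxr⟩
    exact h R hRmod I
end

section
/- A ring R is a right p.p.-ring if and only if R is torsion-free and, for each x ∈ R, the right annihilator ann_r(x) is a finitely generated right ideal of R. -/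
open MulOpposite

section Proof

open Submodule

variable {R : Type*} [Ring R]

private lemma op_smul' (r x : R) : (op r) • x = x * r := rfl

/-- Left multiplication as an `Rᵐᵒᵖ`-linear map. -/
private def lmul (x : R) : R →ₗ[Rᵐᵒᵖ] R where
  toFun r := x * r
  map_add' := mul_add x
  map_smul' a r := by
    show x * (a • r) = a • (x * r)
    rw [← op_unop a, op_smul', op_smul', mul_assoc]

private lemma mem_rightAnn' {x r : R} : r ∈ RightAnn R R x ↔ x * r = 0 := by
  change op r • x = 0 ↔ _
  rw [op_smul']

private def unopEquiv : Rᵐᵒᵖ ≃ₗ[Rᵐᵒᵖ] R where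
  toFun := unop
  invFun := op
  map_add' _ _ := rfl
  map_smul' _ _ := rfl
  left_inv _ := rfl
  right_inv _ := rfl

private lemma pp_aux (x : R)
    (hproj : Module.Projective Rᵐᵒᵖ (span Rᵐᵒᵖ ({x} : Set R))) :
    ∃ s : R, x * s = x ∧ ∀ r : R, x * r = 0 → s * r = 0 := by
  have hmem : ∀ r : R, x * r ∈ span Rᵐᵒᵖ ({x} : Set R) := fun r => by
    rw [← op_smul']
    exact Submodule.smul_mem _ _ (mem_span_singleton_self x)
  let π : R →ₗ[Rᵐᵒᵖ] span Rᵐᵒᵖ ({x} : Set R) :=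
    LinearMap.codRestrict _ (lmul x) hmem
  have hsurj : Function.Surjective π := by
    rintro ⟨y, hy⟩
    obtain ⟨c, rfl⟩ := mem_span_singleton.mp hy
    refine ⟨unop c, Subtype.ext ?_⟩
    show x * unop c = c • x
    conv_rhs => rw [← op_unop c, op_smul']
  haveI := hproj
  obtain ⟨h, hh⟩ := Module.projective_lifting_property π LinearMap.id hsurj
  set xx : span Rᵐᵒᵖ ({x} : Set R) := ⟨x, mem_span_singleton_self x⟩ with hxx
  refine ⟨h xx, ?_, ?_⟩
  · have := congrArg (fun g => (g xx : span Rᵐᵒᵖ ({x} : Set R))) hh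
    have := congrArg Subtype.val this
    simpa [π, lmul] using this
  · intro r hr
    have h0 : (op r) • xx = 0 := Subtype.ext (by simpa [op_smul'] using hr)
    have : h ((op r) • xx) = 0 := by rw [h0, map_zero]
    rw [map_smul, op_smul'] at this
    exact this

private lemma aux_proj (x s : R) (hxs : x * s = x)
    (hann : ∀ r : R, x * r = 0 → s * r = 0) :
    Module.Projective Rᵐᵒᵖ (span Rᵐᵒᵖ ({x} : Set R)) := by
  have hmem : ∀ r : R, x * r ∈ span Rᵐᵒᵖ ({x} : Set R) := fun r => by
    rw [← op_smul']
    exact Submodule.smul_mem _ _ (mem_span_singleton_self x)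
  let π : R →ₗ[Rᵐᵒᵖ] span Rᵐᵒᵖ ({x} : Set R) :=
    LinearMap.codRestrict _ (lmul x) hmem
  have hsurj : Function.Surjective π := by
    rintro ⟨y, hy⟩
    obtain ⟨c, rfl⟩ := mem_span_singleton.mp hy
    refine ⟨unop c, Subtype.ext ?_⟩
    show x * unop c = c • x
    conv_rhs => rw [← op_unop c, op_smul']
  set J := LinearMap.ker π with hJdef
  have hJ : ∀ r : R, r ∈ J ↔ x * r = 0 := fun r => by
    rw [hJdef, LinearMap.mem_ker]
    constructor
    · intro h; exact congrArg Subtype.val h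
    · intro h; exact Subtype.ext h
  have hle : J ≤ LinearMap.ker (lmul s) := fun r hr => by
    have : s * r = 0 := hann r ((hJ r).mp hr)
    exact this
  let i : (R ⧸ J) →ₗ[Rᵐᵒᵖ] R := J.liftQ (lmul s) hle
  have H : (J.mkQ).comp i = LinearMap.id := by
    apply Submodule.linearMap_qext
    refine LinearMap.ext fun r => ?_
    show Submodule.Quotient.mk (s * r) = Submodule.Quotient.mk r
    rw [Submodule.Quotient.eq]
    exact (hJ _).mpr (by rw [mul_sub, ← mul_assoc, hxs, sub_self])
  haveI : Module.Projective Rᵐᵒᵖ R := Module.Projective.of_equiv unopEquiv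
  haveI : Module.Projective Rᵐᵒᵖ (R ⧸ J) := Module.Projective.of_split i J.mkQ H
  exact Module.Projective.of_equiv (π.quotKerEquivOfSurjective hsurj)

private lemma step (htf : IsTorsionFreeRing R) (x r : R) (hxr : x * r = 0) :
    ∃ s : R, x * s = x ∧ s * r = 0 := by
  have hfg : (span Rᵐᵒᵖ ({x} : Set R)).FG := fg_span_singleton x
  have hx : x ∈ span Rᵐᵒᵖ ({x} : Set R) := mem_span_singleton_self x
  have h0 : (op r) • (⟨x, hx⟩ : span Rᵐᵒᵖ ({x} : Set R)) = 0 :=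
    Subtype.ext (by simpa [op_smul'] using hxr)
  obtain ⟨k, xs, rs, hsum, hz⟩ := htf _ hfg ⟨x, hx⟩ r h0
  choose a ha using fun i => mem_span_singleton.mp (xs i).2
  refine ⟨∑ i, unop (a i) * rs i, ?_, ?_⟩
  · have hval := congrArg Subtype.val hsum
    have hval' : x = ∑ i, ((xs i : R) * rs i) := by
      simpa [op_smul'] using hval
    calc x * ∑ i, unop (a i) * rs i
        = ∑ i, x * (unop (a i) * rs i) := Finset.mul_sum _ _ _
      _ = ∑ i, (x * unop (a i)) * rs i := by simp [mul_assoc]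
      _ = ∑ i, ((xs i : R) * rs i) := by
          refine Finset.sum_congr rfl fun i _ => ?_
          rw [show x * unop (a i) = (xs i : R) from by
            rw [← op_smul', op_unop]; exact ha i]
      _ = x := hval'.symm
  · rw [Finset.sum_mul]
    refine Finset.sum_eq_zero fun i _ => ?_
    rw [mul_assoc, hz i, mul_zero]

private lemma multi (htf : IsTorsionFreeRing R) (x : R) :
    ∀ (n : ℕ) (g : Fin n → R), (∀ i, x * g i = 0) →
      ∃ s : R, x * s = x ∧ ∀ i, s * g i = 0
  | 0, _, _ => ⟨1, mul_one x, fun i => i.elim0⟩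
  | n + 1, g, hg => by
      obtain ⟨s₀, hs₀, hz₀⟩ := multi htf x n (fun i => g i.succ) (fun i => hg i.succ)
      obtain ⟨t, ht, htz⟩ := step htf x (s₀ * g 0)
        (by rw [← mul_assoc, hs₀]; exact hg 0)
      refine ⟨t * s₀, by rw [← mul_assoc, ht, hs₀], fun i => ?_⟩
      refine Fin.cases ?_ ?_ i
      · rw [mul_assoc]; exact htz
      · intro j
        rw [mul_assoc, hz₀ j, mul_zero]

end Proof

/-- A ring `R` is a right p.p.-ring if and only if `R` is torsion-free and the right
annihilator of every element is a finitely generated right ideal. -/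
theorem stmt_7 (R : Type*) [Ring R] :
    IsRightPPRing R ↔
      IsTorsionFreeRing R ∧ ∀ x : R, (RightAnn R R x).FG := by
  constructor
  · intro hpp
    constructor
    · intro I _ x r hxr
      have hx : (x : R) * r = 0 := by
        have := congrArg Subtype.val hxr
        simpa [op_smul'] using this
      obtain ⟨s, hxs, hann⟩ := pp_aux (x : R) (hpp (x : R))
      refine ⟨1, fun _ => x, fun _ => s, ?_, fun _ => hann r hx⟩
      rw [Fin.sum_univ_one]
      refine Subtype.ext ?_
      show (x : R) = op s • (x : R)
      rw [op_smul', hxs]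
    · intro x
      obtain ⟨s, hxs, hann⟩ := pp_aux x (hpp x)
      have hxe : x * (1 - s) = 0 := by rw [mul_sub, mul_one, hxs, sub_self]
      have key : RightAnn R R x = Submodule.span Rᵐᵒᵖ ({1 - s} : Set R) := by
        apply le_antisymm
        · intro r hr
          have hxr : x * r = 0 := mem_rightAnn'.mp hr
          have hsr : s * r = 0 := hann r hxr
          rw [Submodule.mem_span_singleton]
          refine ⟨op r, ?_⟩
          rw [op_smul', sub_mul, one_mul, hsr, sub_zero]
        · rw [Submodule.span_le, Set.singleton_subset_iff, SetLike.mem_coe]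
          exact mem_rightAnn'.mpr hxe
      rw [key]
      exact Submodule.fg_span_singleton _
  · rintro ⟨htf, hfg⟩ x
    obtain ⟨n, g, hg⟩ := Submodule.fg_iff_exists_fin_generating_family.mp (hfg x)
    have hgz : ∀ i, x * g i = 0 := fun i =>
      mem_rightAnn'.mp (hg ▸ Submodule.subset_span (Set.mem_range_self i))
    obtain ⟨s, hxs, hsz⟩ := multi htf x n g hgz
    apply aux_proj x s hxs
    intro r hr
    have hrJ : r ∈ Submodule.span Rᵐᵒᵖ (Set.range g) := by
      rw [hg]; exact mem_rightAnn'.mpr hr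
    refine Submodule.span_induction ?_ ?_ ?_ ?_ hrJ
    · rintro y ⟨i, rfl⟩
      exact hsz i
    · exact mul_zero s
    · intro a b _ _ ha hb
      rw [mul_add, ha, hb, add_zero]
    · intro c a _ ha
      rw [← op_unop c, op_smul', ← mul_assoc, ha, zero_mul]
end

section
/- If R is a ring which is both a right p.p.-ring and a left p.p.-ring and which does not contain an infinite set of orthogonal idempotents, and M is a torsion-free right R-module, then for every x ∈ M there exists an idempotent e ∈ R such that the right annihilator ann_r(x) = {r ∈ R | xr = 0} equals eR. -/
open MulOpposite

section Aux

variable {R : Type*} [Ring R]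

lemma leftPP_step (hl : IsLeftPPRing R) (s : R) :
    ∃ f : R, f * f = f ∧ f * s = s ∧ ∀ t : R, t * s = 0 → t * f = 0 := by
  haveI hproj := hl s
  set N := Submodule.span R ({s} : Set R) with hN
  have hmem : ∀ r : R, LinearMap.toSpanSingleton R R s r ∈ N := by
    intro r
    rw [LinearMap.toSpanSingleton_apply]
    exact N.smul_mem r (Submodule.mem_span_singleton_self s)
  set π : R →ₗ[R] N := LinearMap.codRestrict N (LinearMap.toSpanSingleton R R s) hmem with hπdef
  have hπval : ∀ r : R, ((π r : N) : R) = r * s := by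
    intro r
    simp [hπdef, LinearMap.codRestrict_apply, LinearMap.toSpanSingleton_apply, smul_eq_mul]
  have hπ : Function.Surjective π := by
    rintro ⟨y, hy⟩
    rw [Submodule.mem_span_singleton] at hy
    obtain ⟨r, hr⟩ := hy
    refine ⟨r, Subtype.ext ?_⟩
    rw [hπval]
    show r * s = y
    rw [← hr, smul_eq_mul]
  obtain ⟨σ, hσ⟩ := Module.projective_lifting_property π LinearMap.id hπ
  have hσπ : ∀ y : N, π (σ y) = y := by
    intro y
    have := LinearMap.ext_iff.mp hσ y
    simpa using this
  set c : R := σ (π 1) with hc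
  have hmulc : ∀ t : R, t * c = σ (π t) := by
    intro t
    have h1 : π t = t • π 1 := by rw [← map_smul, smul_eq_mul, mul_one]
    rw [h1, map_smul, smul_eq_mul, hc]
  have hπc : π c = π 1 := hσπ (π 1)
  have hcs : c * s = s := by
    have h2 := congrArg Subtype.val hπc
    rw [hπval, hπval, one_mul] at h2
    exact h2
  refine ⟨c, ?_, hcs, ?_⟩
  · rw [hmulc, hπc, ← hc]
  · intro t ht
    have hπt : π t = 0 := by
      refine Subtype.ext ?_
      rw [hπval]
      simpa using ht
    rw [hmulc, hπt, map_zero]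

lemma exists_idem_gen (hno : NoInfiniteOrthogonalIdempotents R)
    (I : Submodule Rᵐᵒᵖ R)
    (hstep : ∀ s ∈ I, ∃ f : R, f * f = f ∧ f ∈ I ∧ f * s = s ∧
      ∀ t : R, t * s = 0 → t * f = 0) :
    ∃ e : R, e * e = e ∧ (I : Set R) = {y : R | ∃ r : R, y = e * r} := by
  by_contra hcon
  push_neg at hcon
  have key : ∀ e : R, e * e = e → e ∈ I →
      ∃ f : R, f * f = f ∧ f ≠ 0 ∧ e * f = 0 ∧ f * e = 0 ∧ f ∈ I := by
    intro e he heI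
    have hsub : {y : R | ∃ r : R, y = e * r} ⊆ (I : Set R) := by
      rintro y ⟨r, rfl⟩
      have := I.smul_mem (op r) heI
      rwa [op_smul_eq_mul] at this
    have hne := hcon e he
    obtain ⟨s, hsI, hs⟩ : ∃ s, s ∈ I ∧ s ∉ {y : R | ∃ r : R, y = e * r} := by
      by_contra h
      push_neg at h
      exact hne (Set.Subset.antisymm h hsub)
    set s' := s - e * s with hs'
    have hs'I : s' ∈ I := by
      refine I.sub_mem hsI ?_
      have := I.smul_mem (op s) heI
      rwa [op_smul_eq_mul] at this
    have hes' : e * s' = 0 := by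
      rw [hs', mul_sub, ← mul_assoc, he, sub_self]
    have hs'0 : s' ≠ 0 := by
      intro h
      apply hs
      rw [hs', sub_eq_zero] at h
      exact ⟨s, h⟩
    obtain ⟨f, hf, hfI, hfs, hft⟩ := hstep s' hs'I
    have hef : e * f = 0 := hft e hes'
    refine ⟨f - f * e, ?_, ?_, ?_, ?_, ?_⟩
    · have hexp : (f - f*e) * (f - f*e) = f*f - f*f*e - f*(e*f) + f*(e*f)*e := by
        noncomm_ring
      rw [hexp, hef, hf]
      simp
    · intro h0
      apply hs'0
      have h1 : (f - f*e) * s' = s' := by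
        rw [sub_mul, mul_assoc, hes', mul_zero, sub_zero, hfs]
      rw [h0, zero_mul] at h1
      exact h1.symm
    · rw [mul_sub, hef, ← mul_assoc, hef, zero_mul, sub_zero]
    · rw [sub_mul, mul_assoc, he, sub_self]
    · refine I.sub_mem hfI ?_
      have := I.smul_mem (op e) hfI
      rwa [op_smul_eq_mul] at this
  -- build an infinite orthogonal family
  have step : ∀ p : {e : R // e * e = e ∧ e ∈ I},
      ∃ q : {e : R // e * e = e ∧ e ∈ I}, ∃ f : R,
        q.1 = p.1 + f ∧ f * f = f ∧ f ≠ 0 ∧ p.1 * f = 0 ∧ f * p.1 = 0 := by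
    rintro ⟨e, he, heI⟩
    obtain ⟨f, hf, hf0, hef, hfe, hfI⟩ := key e he heI
    refine ⟨⟨e + f, ?_, I.add_mem heI hfI⟩, f, rfl, hf, hf0, hef, hfe⟩
    have hexp : (e + f) * (e + f) = e*e + e*f + (f*e + f*f) := by noncomm_ring
    rw [hexp, he, hf, hef, hfe, add_zero, zero_add]
  choose next F hnext hFidem hF0 hEF hFE using step
  set E : ℕ → {e : R // e * e = e ∧ e ∈ I} :=
    fun n => Nat.rec ⟨0, by simp, I.zero_mem⟩ (fun _ p => next p) n with hEdef
  have hE : ∀ n, (E (n+1)).1 = (E n).1 + F (E n) := fun n => hnext (E n)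
  set Fs : ℕ → R := fun n => F (E n) with hFs
  have hmul : ∀ j i, i < j → (E j).1 * Fs i = Fs i ∧ Fs i * (E j).1 = Fs i := by
    intro j
    induction j with
    | zero => intro i hi; omega
    | succ j ih =>
      intro i hi
      rcases Nat.lt_succ_iff_lt_or_eq.mp hi with h | h
      · obtain ⟨h1, h2⟩ := ih i h
        constructor
        · rw [hE, add_mul, h1]
          have : Fs j * Fs i = 0 := by
            rw [← h1, ← mul_assoc, hFE (E j), zero_mul]
          rw [this, add_zero]
        · rw [hE, mul_add, h2]
          have : Fs i * Fs j = 0 := by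
            rw [← h2, mul_assoc, hEF (E j), mul_zero]
          rw [this, add_zero]
      · subst h
        constructor
        · rw [hE, add_mul, hEF (E i), hFidem (E i), zero_add]
        · rw [hE, mul_add, hFE (E i), hFidem (E i), zero_add]
  have horth : ∀ i j, i < j → Fs i * Fs j = 0 ∧ Fs j * Fs i = 0 := by
    intro i j hij
    obtain ⟨h1, h2⟩ := hmul j i hij
    constructor
    · rw [← h2, mul_assoc, hEF (E j), mul_zero]
    · rw [← h1, ← mul_assoc, hFE (E j), zero_mul]
  have horth' : ∀ i j, i ≠ j → Fs i * Fs j = 0 ∧ Fs j * Fs i = 0 := by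
    intro i j hij
    rcases lt_or_gt_of_ne hij with h | h
    · exact horth i j h
    · exact ⟨(horth j i h).2, (horth j i h).1⟩
  have hinj : Function.Injective Fs := by
    intro i j hij
    by_contra hne
    have h0 := (horth' i j hne).1
    rw [hij] at h0
    rw [hFidem (E j)] at h0
    exact hF0 (E j) h0
  have hfin := hno (Set.range Fs)
    (by rintro e ⟨n, rfl⟩; exact ⟨hFidem (E n), hF0 (E n)⟩)
    (by
      rintro e ⟨n, rfl⟩ f ⟨m, rfl⟩ hne
      have hnm : n ≠ m := by rintro rfl; exact hne rfl
      exact horth' n m hnm)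
  exact (Set.infinite_range_of_injective hinj) hfin

end Aux


/-- If `R` is a right and left p.p.-ring with no infinite set of orthogonal idempotents
and `M` is a torsion-free right `R`-module, then the right annihilator of every element
of `M` is generated by an idempotent. -/
theorem stmt_8 (R : Type*) [Ring R] (hr : IsRightPPRing R) (hl : IsLeftPPRing R)
    (hno : NoInfiniteOrthogonalIdempotents R)
    (M : Type*) [AddCommGroup M] [Module Rᵐᵒᵖ M] (hM : HattoriTorsionFree R M) :
    ∀ x : M, ∃ e : R, e * e = e ∧
      {r : R | op r • x = 0} = {y : R | ∃ r : R, y = e * r} :=  by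
  intro x
  have hstep : ∀ s ∈ RightAnn R M x, ∃ f : R, f * f = f ∧ f ∈ RightAnn R M x ∧
      f * s = s ∧ ∀ t : R, t * s = 0 → t * f = 0 := by
    intro s hs
    have hxs : op s • x = 0 := hs
    obtain ⟨k, xs, rs, hx, hrs⟩ := hM x s hxs
    obtain ⟨f, hf, hfs, hft⟩ := leftPP_step hl s
    refine ⟨f, hf, ?_, hfs, hft⟩
    show op f • x = 0
    rw [hx, Finset.smul_sum]
    apply Finset.sum_eq_zero
    intro i _
    rw [smul_smul, ← op_mul, hft _ (hrs i), op_zero, zero_smul]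
  obtain ⟨e, he, heq⟩ := exists_idem_gen hno (RightAnn R M x) hstep
  refine ⟨e, he, ?_⟩
  rw [← heq]
  rfl
end

section
/- If R is a ring which is both a right p.p.-ring and a left p.p.-ring and which does not contain an infinite set of orthogonal idempotents, then every cyclic submodule of a torsion-free right R-module is projective. -/
open MulOpposite

/-!
Write `I = {r | x r = 0}`. Over any ring, a cyclic module generated by `x` is projective exactly
when the annihilator of `x` is the left annihilator of an idempotent `c` (the module is then
isomorphic to the direct summand generated by `c`), so it suffices to show `I = eR` for an
idempotent `e`.

The left p.p. property attaches to every `r` an idempotent `c` with `c r = r` whose left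
annihilator contains that of `r`; Hattori torsion-freeness puts this `c` in `I` whenever `r ∈ I`.
Let `e` be maximal among the idempotents of `I`: it exists because the successive differences of
a strictly increasing chain of idempotents are infinitely many orthogonal idempotents. If `r ∈ I`
and `s = r - e r ≠ 0`, the idempotent `c` attached to `s` satisfies `e c = 0`, so
`e + c (1 - e)` is an idempotent of `I` strictly above `e`.
-/

lemma IsIdempotentElem.smul_eq_self_of_forall_smul_eq_zero_iff {A M : Type*} [Ring A]
    [AddCommGroup M] [Module A M] {x : M} {c : A} (hc : IsIdempotentElem c)
    (hann : ∀ a : A, a • x = 0 ↔ a * c = 0) : c • x = x := by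
  have := (hann (1 - c)).2 hc.one_sub_mul_self
  rwa [sub_smul, one_smul, sub_eq_zero, eq_comm] at this

theorem Module.projective_span_singleton_iff {A M : Type*} [Ring A] [AddCommGroup M] [Module A M]
    (x : M) :
    Module.Projective A (Submodule.span A {x}) ↔
      ∃ c : A, IsIdempotentElem c ∧ ∀ a : A, a • x = 0 ↔ a * c = 0 := by
  rw [LinearMap.span_singleton_eq_range]
  set π := (LinearMap.toSpanSingleton A M x).rangeRestrict
  have hπ (a : A) : (π a : M) = a • x := rfl
  have hπs : Function.Surjective π := LinearMap.surjective_rangeRestrict _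
  rw [Module.Projective.iff_split_of_projective π hπs]
  constructor
  · rintro ⟨σ, hσ⟩
    have hσ' (y) : π (σ y) = y := LinearMap.congr_fun hσ y
    have hσπ (a : A) : a * σ (π 1) = σ (π a) := by
      rw [← smul_eq_mul, ← map_smul, ← map_smul, smul_eq_mul, mul_one]
    refine ⟨σ (π 1), by rw [IsIdempotentElem, hσπ, hσ'], fun a => ⟨fun ha => ?_, fun ha => ?_⟩⟩
    · rw [hσπ, show π a = 0 from Subtype.ext ha, map_zero]
    · rw [← hπ, ← hσ' (π a), ← hσπ, ha, map_zero, ZeroMemClass.coe_zero]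
  · rintro ⟨c, hc, hann⟩
    have hcx : c • x = x := hc.smul_eq_self_of_forall_smul_eq_zero_iff hann
    have hker : LinearMap.ker π ≤ LinearMap.ker (LinearMap.toSpanSingleton A A c) :=
      fun a ha => (hann a).1 (congrArg Subtype.val ha)
    refine ⟨(LinearMap.ker π).liftQ _ hker ∘ₗ (π.quotKerEquivOfSurjective hπs).symm, ?_⟩
    ext1 y
    obtain ⟨a, rfl⟩ := hπs y
    apply Subtype.ext
    simp [hπ, mul_smul, hcx]

section Ring

variable {R : Type*} [Ring R]

lemma IsLeftPPRing.exists_idempotent_mul_eq_self (hl : IsLeftPPRing R) (r : R) :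
    ∃ c : R, IsIdempotentElem c ∧ c * r = r ∧ ∀ s : R, s * r = 0 → s * c = 0 := by
  obtain ⟨c, hc, hann⟩ := (Module.projective_span_singleton_iff r).1 (hl r)
  exact ⟨c, hc, hc.smul_eq_self_of_forall_smul_eq_zero_iff hann, fun s => (hann s).1⟩

lemma HattoriTorsionFree.op_smul_eq_zero_of_leftAnn_le {M : Type*} [AddCommGroup M]
    [Module Rᵐᵒᵖ M] (hM : HattoriTorsionFree R M) {x : M} {r c : R} (hx : op r • x = 0)
    (hc : ∀ s : R, s * r = 0 → s * c = 0) : op c • x = 0 := by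
  obtain ⟨k, xs, rs, rfl, hrs⟩ := hM x r hx
  simp only [Finset.smul_sum, smul_smul, ← op_mul, hc _ (hrs _), op_zero, zero_smul,
    Finset.sum_const_zero]

lemma IsIdempotentElem.orthogonal_mul_one_sub {e c : R} (he : IsIdempotentElem e)
    (hc : IsIdempotentElem c) (hec : e * c = 0) :
    IsIdempotentElem (c * (1 - e)) ∧ e * (c * (1 - e)) = 0 ∧ c * (1 - e) * e = 0 := by
  refine ⟨?_, by rw [← mul_assoc, hec, zero_mul], by rw [mul_assoc, he.one_sub_mul_self, mul_zero]⟩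
  rw [IsIdempotentElem, mul_assoc, ← mul_assoc (1 - e), sub_mul, one_mul, hec, sub_zero,
    ← mul_assoc, hc.eq]

lemma orthogonalIdempotents_sub_of_chain {e : ℕ → R} (he : ∀ n, IsIdempotentElem (e n))
    (hle : ∀ n, e n * e (n + 1) = e n ∧ e (n + 1) * e n = e n) :
    OrthogonalIdempotents fun n => e (n + 1) - e n := by
  have hmono {n m : ℕ} (hnm : n ≤ m) : e n * e m = e n ∧ e m * e n = e n := by
    induction m, hnm using Nat.le_induction with
    | base => exact ⟨(he n).eq, (he n).eq⟩
    | succ m _ ih =>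
      exact ⟨by rw [← ih.1, mul_assoc, (hle m).1], by rw [← ih.2, ← mul_assoc, (hle m).2]⟩
  have hlt {n m : ℕ} (hnm : n < m) :
      (e (n + 1) - e n) * (e (m + 1) - e m) = 0 ∧ (e (m + 1) - e m) * (e (n + 1) - e n) = 0 := by
    obtain ⟨h₁, h₁'⟩ := hmono (show n + 1 ≤ m + 1 by omega)
    obtain ⟨h₂, h₂'⟩ := hmono (show n + 1 ≤ m by omega)
    obtain ⟨h₃, h₃'⟩ := hmono (show n ≤ m + 1 by omega)
    obtain ⟨h₄, h₄'⟩ := hmono (show n ≤ m by omega)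
    simp only [mul_sub, sub_mul, h₁, h₁', h₂, h₂', h₃, h₃', h₄, h₄', sub_self, and_self]
  refine ⟨fun n => (he n).sub (he (n + 1)) (hle n).1 (hle n).2, fun n m hnm => ?_⟩
  rcases hnm.lt_or_gt with h | h
  · exact (hlt h).1
  · exact (hlt h).2

lemma NoInfiniteOrthogonalIdempotents.exists_eq_zero (hno : NoInfiniteOrthogonalIdempotents R)
    {g : ℕ → R} (hg : OrthogonalIdempotents g) : ∃ n, g n = 0 := by
  by_contra! hne
  have hinj : Function.Injective g := fun n m hnm => by
    by_contra h
    exact hne n (by rw [← (hg.idem n).eq]; nth_rewrite 2 [hnm]; exact hg.ortho h)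
  refine Set.infinite_range_of_injective hinj (hno _ ?_ ?_)
  · rintro _ ⟨n, rfl⟩
    exact ⟨hg.idem n, hne n⟩
  · rintro _ ⟨n, rfl⟩ _ ⟨m, rfl⟩ hnm
    have hnm : n ≠ m := fun h => hnm (congrArg g h)
    exact ⟨hg.ortho hnm, hg.ortho hnm.symm⟩

lemma NoInfiniteOrthogonalIdempotents.exists_maximal (hno : NoInfiniteOrthogonalIdempotents R)
    {S : Set R} (hS : ∀ e ∈ S, IsIdempotentElem e) (hne : S.Nonempty) :
    ∃ e ∈ S, ∀ f ∈ S, e * f = e → f * e = e → f = e := by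
  by_contra! h
  have hstep (e : S) : ∃ f : S, e.1 * f.1 = e.1 ∧ f.1 * e.1 = e.1 ∧ f.1 ≠ e.1 := by
    obtain ⟨f, hf, hef⟩ := h e.1 e.2
    exact ⟨⟨f, hf⟩, hef⟩
  choose F hF using hstep
  obtain ⟨e₀, he₀⟩ := hne
  set s : ℕ → S := fun n => F^[n] ⟨e₀, he₀⟩
  have hsucc (n : ℕ) : s (n + 1) = F (s n) := Function.iterate_succ_apply' F n _
  obtain ⟨n, hn⟩ := hno.exists_eq_zero (orthogonalIdempotents_sub_of_chain
    (e := fun n => (s n : R)) (fun n => hS _ (s n).2) fun n => by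
      simp only [hsucc]; exact ⟨(hF _).1, (hF _).2.1⟩)
  exact (hF (s n)).2.2 (by rw [← hsucc]; exact sub_eq_zero.1 hn)

lemma exists_idempotent_forall_op_smul_eq_zero_iff (hl : IsLeftPPRing R)
    (hno : NoInfiniteOrthogonalIdempotents R) {M : Type*} [AddCommGroup M] [Module Rᵐᵒᵖ M]
    (hM : HattoriTorsionFree R M) (x : M) :
    ∃ e : R, IsIdempotentElem e ∧ ∀ r : R, op r • x = 0 ↔ e * r = r := by
  obtain ⟨e, ⟨he, hex⟩, hmax⟩ := hno.exists_maximal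
    (S := {e | IsIdempotentElem e ∧ op e • x = 0}) (fun e he => he.1)
    ⟨0, IsIdempotentElem.zero, by rw [op_zero, zero_smul]⟩
  refine ⟨e, he, fun r => ⟨fun hrx => ?_, fun her => by
    rw [← her, op_mul, mul_smul, hex, smul_zero]⟩⟩
  set s := r - e * r
  have hsx : op s • x = 0 := by
    rw [op_sub, sub_smul, op_mul, mul_smul, hex, smul_zero, hrx, sub_zero]
  have hes : e * s = 0 := by rw [mul_sub, ← mul_assoc, he.eq, sub_self]
  obtain ⟨c, hc, hcs, hann⟩ := hl.exists_idempotent_mul_eq_self s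
  have hcx : op c • x = 0 := hM.op_smul_eq_zero_of_leftAnn_le hsx hann
  obtain ⟨hu, heu, hue⟩ := he.orthogonal_mul_one_sub hc (hann e hes)
  set u := c * (1 - e)
  have hux : op u • x = 0 := by rw [op_mul, mul_smul, hcx, smul_zero]
  have hu0 : u = 0 := by
    have := hmax (e + u) ⟨he.add hu (by rw [heu, hue, add_zero]),
      by rw [op_add, add_smul, hex, hux, add_zero]⟩
      (by rw [mul_add, he.eq, heu, add_zero]) (by rw [add_mul, he.eq, hue, add_zero])
    rwa [add_eq_left] at this
  have hus : u * s = s := by rw [mul_assoc, sub_mul, one_mul, hes, sub_zero, hcs]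
  rw [hu0, zero_mul] at hus
  exact (sub_eq_zero.1 hus.symm).symm

end Ring

theorem stmt_9_general (R : Type*) [Ring R] (hl : IsLeftPPRing R)
    (hno : NoInfiniteOrthogonalIdempotents R)
    (M : Type*) [AddCommGroup M] [Module Rᵐᵒᵖ M] (hM : HattoriTorsionFree R M) :
    ∀ x : M, Module.Projective Rᵐᵒᵖ (Submodule.span Rᵐᵒᵖ ({x} : Set M)) := by
  intro x
  obtain ⟨e, he, hann⟩ := exists_idempotent_forall_op_smul_eq_zero_iff hl hno hM x
  refine (Module.projective_span_singleton_iff x).2 ⟨op (1 - e),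
    by rw [IsIdempotentElem, ← op_mul, he.one_sub.eq], fun a => ?_⟩
  induction a using MulOpposite.rec' with
  | _ r => rw [hann r, ← op_mul, op_eq_zero_iff, sub_mul, one_mul, sub_eq_zero, eq_comm]

/-- If `R` is a right and left p.p.-ring with no infinite set of orthogonal idempotents,
then every cyclic submodule of a torsion-free right `R`-module is projective. -/
theorem stmt_9 (R : Type*) [Ring R] (hr : IsRightPPRing R) (hl : IsLeftPPRing R)
    (hno : NoInfiniteOrthogonalIdempotents R)
    (M : Type*) [AddCommGroup M] [Module Rᵐᵒᵖ M] (hM : HattoriTorsionFree R M) :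
    ∀ x : M, Module.Projective Rᵐᵒᵖ (Submodule.span Rᵐᵒᵖ ({x} : Set M)) :=
  stmt_9_general R hl hno M hM
end

section
/- If R is a torsion-free ring such that for every x ∈ R the right annihilator ann_r(x) is a finitely generated right ideal, and the right annihilators of elements of R satisfy the ascending chain condition, then R is a Baer-ring. -/
open MulOpposite

section AuxTF
variable {R : Type*} [Ring R]

lemma tf_single (htf : IsTorsionFreeRing R) (x r : R) (hxr : x * r = 0) :
    ∃ v : R, x * v = x ∧ v * r = 0 := by
  set I := Submodule.span Rᵐᵒᵖ ({x} : Set R) with hI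
  have hxI : x ∈ I := Submodule.mem_span_singleton_self x
  have hfgI : I.FG := ⟨{x}, by simp [hI]⟩
  obtain ⟨k, xs, rs, hsum, hkill⟩ := htf I hfgI ⟨x, hxI⟩ r (by
    apply Subtype.ext
    show op r • x = 0
    rw [op_smul_eq_mul, hxr])
  choose a ha using fun i => (Submodule.mem_span_singleton.mp (xs i).2)
  have hx2 : ∀ i, (xs i : R) = x * unop (a i) := by
    intro i
    have h3 := ha i
    have h4 : (a i) • x = x * unop (a i) := rfl
    rw [h4] at h3
    exact h3.symm
  have hval : x = ∑ i, (xs i : R) * rs i := by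
    have := congrArg Subtype.val hsum
    simpa [op_smul_eq_mul] using this
  refine ⟨∑ i, (unop (a i)) * rs i, ?_, ?_⟩
  · rw [Finset.mul_sum]
    have : ∀ i ∈ Finset.univ, x * (unop (a i) * rs i) = (xs i : R) * rs i := by
      intro i _
      rw [← mul_assoc, ← hx2 i]
    rw [Finset.sum_congr rfl this]
    exact hval.symm
  · rw [Finset.sum_mul]
    apply Finset.sum_eq_zero
    intro i _
    rw [mul_assoc, hkill i, mul_zero]

lemma tf_finset (htf : IsTorsionFreeRing R) (x : R) (S : Finset R)
    (hS : ∀ r ∈ S, x * r = 0) :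
    ∃ u : R, x * u = x ∧ ∀ r ∈ S, u * r = 0 := by
  classical
  induction S using Finset.induction_on with
  | empty => exact ⟨1, mul_one x, fun r hr => absurd hr (Finset.notMem_empty r)⟩
  | @insert r S' hrS ih =>
    obtain ⟨u, hu1, hu2⟩ := ih (fun s hs => hS s (Finset.mem_insert_of_mem hs))
    have hxur : x * (u * r) = 0 := by
      rw [← mul_assoc, hu1]; exact hS r (Finset.mem_insert_self r S')
    obtain ⟨v, hv1, hv2⟩ := tf_single htf x (u * r) hxur
    refine ⟨u * (v * u), ?_, ?_⟩
    · rw [← mul_assoc, hu1, ← mul_assoc, hv1, hu1]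
    · intro s hs
      rcases Finset.mem_insert.mp hs with rfl | hs'
      · rw [mul_assoc, mul_assoc, hv2, mul_zero]
      · rw [mul_assoc, mul_assoc, hu2 s hs', mul_zero, mul_zero]

lemma tf_pp (htf : IsTorsionFreeRing R) (hfg : ∀ x : R, (RightAnn R R x).FG) (x : R) :
    ∃ e : R, e * e = e ∧ ∀ r : R, x * r = 0 ↔ e * r = r := by
  obtain ⟨S, hS⟩ := hfg x
  have hmem : ∀ r : R, x * r = 0 ↔ r ∈ RightAnn R R x := by
    intro r
    change x * r = 0 ↔ op r • x = 0
    rw [op_smul_eq_mul]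
  obtain ⟨u, hu1, hu2⟩ := tf_finset htf x S
    (fun r hr => (hmem r).mpr (hS ▸ Submodule.subset_span hr))
  have hann : ∀ r : R, x * r = 0 → u * r = 0 := by
    intro r hr
    have hrs : r ∈ Submodule.span Rᵐᵒᵖ (S : Set R) := by rw [hS]; exact (hmem r).mp hr
    clear hr
    induction hrs using Submodule.span_induction with
    | mem s hs => exact hu2 s hs
    | zero => exact mul_zero u
    | add a b _ _ ha hb => rw [mul_add, ha, hb, add_zero]
    | smul c b _ hcb =>
        have h4 : c • b = b * unop c := rfl
        rw [h4, ← mul_assoc, hcb, zero_mul]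
  refine ⟨1 - u, ?_, ?_⟩
  · have hxe : x * (1 - u) = 0 := by rw [mul_sub, mul_one, hu1, sub_self]
    have h5 := hann _ hxe
    rw [sub_mul, one_mul, h5, sub_zero]
  · intro r
    constructor
    · intro hr
      rw [sub_mul, one_mul, hann r hr, sub_zero]
    · intro hr
      have h6 : x * ((1 - u) * r) = 0 := by
        rw [← mul_assoc, mul_sub, mul_one, hu1, sub_self, zero_mul]
      rwa [hr] at h6

def RepIdem (A : Set R) (e : R) : Prop :=
  e * e = e ∧ ∀ r : R, (∀ a ∈ A, a * r = 0) ↔ e * r = r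

lemma rep_step (hpp : ∀ x : R, ∃ e : R, e * e = e ∧ ∀ r : R, x * r = 0 ↔ e * r = r)
    {A : Set R} {e : R} (hA : RepIdem A e) (y : R) :
    ∃ f : R, RepIdem (insert y A) f ∧ f * e = f ∧ e * f = f := by
  obtain ⟨he, hrep⟩ := hA
  obtain ⟨g, hg, hgr⟩ := hpp (y * e)
  have h1 : g * (1 - e) = 1 - e := by
    apply (hgr (1 - e)).mp
    rw [mul_sub, mul_one, mul_assoc, he, sub_self]
  have hge : g * e = g - 1 + e := by
    rw [mul_sub, mul_one] at h1
    calc g * e = g - (g - g * e) := (sub_sub_cancel g (g * e)).symm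
    _ = g - (1 - e) := by rw [h1]
    _ = g - 1 + e := by abel
  have hfe : e * g * e = e * g := by
    rw [mul_assoc, hge, mul_add, mul_sub, mul_one, he]
    abel
  have hff : e * g * (e * g) = e * g := by
    rw [← mul_assoc, hfe, mul_assoc, hg]
  have hef : e * (e * g) = e * g := by rw [← mul_assoc, he]
  refine ⟨e * g, ⟨hff, ?_⟩, hfe, hef⟩
  intro r
  constructor
  · intro h
    have her : e * r = r := (hrep r).mp (fun a ha => h a (Set.mem_insert_of_mem y ha))
    have hyr : (y * e) * r = 0 := by rw [mul_assoc, her]; exact h y (Set.mem_insert y A)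
    have hgrr : g * r = r := (hgr r).mp hyr
    rw [mul_assoc, hgrr, her]
  · intro h
    have her : e * r = r := by
      calc e * r = e * (e * g * r) := by rw [h]
      _ = e * g * r := by rw [← mul_assoc, ← mul_assoc, he]
      _ = r := h
    intro a ha
    rcases Set.mem_insert_iff.mp ha with rfl | haA
    · have hgg : g * (g * r) = g * r := by rw [← mul_assoc, hg]
      have h0 : (a * e) * (g * r) = 0 := (hgr (g * r)).mpr hgg
      calc a * r = a * (e * g * r) := by rw [h]
      _ = (a * e) * (g * r) := by rw [← mul_assoc, ← mul_assoc, mul_assoc]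
      _ = 0 := h0
    · exact (hrep r).mpr her a haA

end AuxTF


/-- If `R` is a torsion-free ring in which the right annihilator of every element is
finitely generated and the right annihilators of elements satisfy the ascending chain
condition, then `R` is a Baer-ring. -/
theorem stmt_10 (R : Type*) [Ring R] (htf : IsTorsionFreeRing R)
    (hfg : ∀ x : R, (RightAnn R R x).FG)
    (hacc : ∀ I : ℕ → Set R, (∀ n, ∃ x : R, I n = {r : R | x * r = 0}) →
      (∀ n, I n ⊆ I (n + 1)) → ∃ N, ∀ n, N ≤ n → I n = I N) :
    IsBaerRing R := by
  have hpp := tf_pp htf hfg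
  intro A
  have key : ∃ (F : Set R) (e : R), F ⊆ A ∧ RepIdem F e ∧
      ∀ r : R, e * r = r → ∀ a ∈ A, a * r = 0 := by
    by_contra hcon
    push_neg at hcon
    have step : ∀ p : {p : Set R × R // p.1 ⊆ A ∧ RepIdem p.1 p.2},
        ∃ q : {p : Set R × R // p.1 ⊆ A ∧ RepIdem p.1 p.2},
        (q.1.2 * p.1.2 = q.1.2 ∧ p.1.2 * q.1.2 = q.1.2) ∧
        ∃ r : R, p.1.2 * r = r ∧ q.1.2 * r ≠ r := by
      rintro ⟨⟨F, e⟩, hFA, hFe⟩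
      obtain ⟨r, hr, a, haA, har⟩ := hcon F e hFA hFe
      obtain ⟨f, hf, hfe, hef⟩ := rep_step hpp hFe a
      refine ⟨⟨(insert a F, f), Set.insert_subset haA hFA, hf⟩, ⟨hfe, hef⟩, r, hr, ?_⟩
      intro hfr
      exact har (((hf.2 r).mpr hfr) a (Set.mem_insert a F))
    let base : {p : Set R × R // p.1 ⊆ A ∧ RepIdem p.1 p.2} :=
      ⟨(∅, (1 : R)), Set.empty_subset A,
        one_mul 1, fun r => ⟨fun _ => one_mul r, fun _ a ha => absurd ha (Set.notMem_empty a)⟩⟩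
    let g : ℕ → {p : Set R × R // p.1 ⊆ A ∧ RepIdem p.1 p.2} :=
      fun n => Nat.rec base (fun _ p => (step p).choose) n
    let E : ℕ → R := fun n => (g n).1.2
    have hgsucc : ∀ n, g (n + 1) = (step (g n)).choose := fun n => rfl
    have hgs : ∀ n, (E (n+1) * E n = E (n+1) ∧ E n * E (n+1) = E (n+1)) ∧
        ∃ r : R, E n * r = r ∧ E (n+1) * r ≠ r := by
      intro n
      have := (step (g n)).choose_spec
      rwa [← hgsucc n] at this
    have hidem : ∀ n, E n * E n = E n := fun n => (g n).2.2.1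
    obtain ⟨N, hN⟩ := hacc (fun n => {r : R | E n * r = 0}) (fun n => ⟨E n, rfl⟩)
      (by
        intro n r hr
        simp only [Set.mem_setOf_eq] at *
        rw [← (hgs n).1.1, mul_assoc, hr, mul_zero])
    obtain ⟨⟨h1, h2⟩, r, hr, hner⟩ := hgs N
    have hIN : {r : R | E (N+1) * r = 0} = {r : R | E N * r = 0} := hN (N+1) (Nat.le_succ N)
    have hs1 : E (N+1) * (r - E (N+1) * r) = 0 := by
      rw [mul_sub, ← mul_assoc, hidem (N+1), sub_self]
    have hs2 : E N * (r - E (N+1) * r) = 0 := by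
      have hmem : (r - E (N+1) * r) ∈ {r : R | E (N+1) * r = 0} := hs1
      rw [hIN] at hmem
      exact hmem
    have hs3 : E N * (r - E (N+1) * r) = r - E (N+1) * r := by
      rw [mul_sub, hr, ← mul_assoc, h2]
    rw [hs2] at hs3
    exact hner (sub_eq_zero.mp hs3.symm).symm
  obtain ⟨F, e, hFA, ⟨he, hrep⟩, hmax⟩ := key
  refine ⟨e, he, ?_⟩
  ext y
  simp only [rightAnnSet, Set.mem_setOf_eq]
  constructor
  · intro hy
    exact ⟨y, ((hrep y).mp (fun a ha => hy a (hFA ha))).symm⟩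
  · rintro ⟨r, rfl⟩
    intro a ha
    exact hmax (e * r) (by rw [← mul_assoc, he]) a ha
end

section
/- Let B be a non-singular right R-module and let A be a submodule of B. Then B is a rational extension of A if and only if A is an essential submodule of B. -/
open MulOpposite

/-!
If `A` is essential in `B` and `A ≤ M`, then for `x ∈ M` the right ideal `{r | x r ∈ A}` is the
preimage of `A` under `r ↦ x r`, hence essential; so `M/A` is singular, and a singular module
has no nonzero map into the non-singular `B`. Conversely, if `A ∩ V = 0` then
`(V + A)/A ≅ V`, and the resulting map `(V + A)/A → B` vanishes only if `V = 0`.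
-/

namespace IsEssentialSubmodule

variable {S : Type*} [Ring S] {M N : Type*} [AddCommGroup M] [Module S M] [AddCommGroup N]
  [Module S N]

theorem mono {U U' : Submodule S M} (hU : IsEssentialSubmodule U) (h : U ≤ U') :
    IsEssentialSubmodule U' :=
  fun V hV ↦ hU V (eq_bot_iff.mpr (hV ▸ inf_le_inf_right V h))

theorem comap {U : Submodule S M} (hU : IsEssentialSubmodule U) (g : N →ₗ[S] M) :
    IsEssentialSubmodule (U.comap g) := by
  intro V hV
  have hker : V ⊓ LinearMap.ker g = ⊥ :=
    eq_bot_iff.mpr (hV ▸ inf_comm V _ ▸ inf_le_inf_left V (LinearMap.ker_le_comap g))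
  have himage : V.map g = ⊥ := hU _ <| eq_bot_iff.mpr <| by
    rintro _ ⟨hyU, x, hxV, rfl⟩
    have hx : x ∈ U.comap g ⊓ V := ⟨hyU, hxV⟩
    rw [hV, Submodule.mem_bot] at hx
    simp [hx]
  rw [← LinearMap.le_ker_iff_map] at himage
  rwa [inf_eq_left.mpr himage] at hker

end IsEssentialSubmodule

theorem Submodule.exists_quotient_sup_hom_apply_eq {S : Type*} [Ring S] {M : Type*}
    [AddCommGroup M] [Module S M] {A V : Submodule S M} (h : A ⊓ V = ⊥) :
    ∃ f : (↥(V ⊔ A) ⧸ A.comap (V ⊔ A).subtype) →ₗ[S] M,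
      ∀ v (hv : v ∈ V), f (Submodule.Quotient.mk ⟨v, Submodule.mem_sup_left hv⟩) = v := by
  have hbot : V.comap V.subtype ⊓ A.comap V.subtype = ⊥ := by
    rw [Submodule.comap_subtype_self, top_inf_eq, ← Submodule.disjoint_iff_comap_eq_bot,
      disjoint_iff, inf_comm, h]
  refine ⟨V.subtype ∘ₗ (Submodule.quotEquivOfEqBot _ hbot).toLinearMap ∘ₗ
    (LinearMap.quotientInfEquivSupQuotient V A).symm.toLinearMap, fun v hv ↦ ?_⟩
  simp [LinearMap.quotientInfEquivSupQuotient_symm_apply_left V A ⟨v, _⟩ hv]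

section RightModule

variable {R : Type*} [Ring R] {N B : Type*} [AddCommGroup N] [Module Rᵐᵒᵖ N] [AddCommGroup B]
  [Module Rᵐᵒᵖ B]

variable (R) in
def toSpanSingletonOp (x : N) : R →ₗ[Rᵐᵒᵖ] N :=
  (LinearMap.toSpanSingleton Rᵐᵒᵖ N x).comp (opLinearEquiv Rᵐᵒᵖ : R ≃ₗ[Rᵐᵒᵖ] Rᵐᵒᵖ).toLinearMap

theorem rightAnn_mkQ (A : Submodule Rᵐᵒᵖ N) (x : N) :
    RightAnn R (N ⧸ A) (A.mkQ x) = A.comap (toSpanSingletonOp R x) := by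
  ext r
  simp [RightAnn, toSpanSingletonOp, ← Submodule.Quotient.mk_smul]

theorem isSingularMod_quotient {A : Submodule Rᵐᵒᵖ N} (hA : IsEssentialSubmodule A) :
    IsSingularMod R (N ⧸ A) := by
  rintro ⟨x⟩
  exact rightAnn_mkQ A x ▸ hA.comap _

theorem rightAnn_le_rightAnn_apply (f : N →ₗ[Rᵐᵒᵖ] B) (x : N) :
    RightAnn R N x ≤ RightAnn R B (f x) := fun r (hr : op r • x = 0) ↦
  show op r • f x = 0 by rw [← map_smul, hr, map_zero]

theorem LinearMap.eq_zero_of_isSingularMod (hN : IsSingularMod R N) (hB : IsNonsingularMod R B)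
    (f : N →ₗ[Rᵐᵒᵖ] B) : f = 0 :=
  LinearMap.ext fun x ↦ hB _ ((hN x).mono (rightAnn_le_rightAnn_apply f x))

end RightModule

/-- For a non-singular right `R`-module `B` and a submodule `A` of `B`, `B` is a
rational extension of `A` (i.e. `Hom(M/A, B) = 0` for every `A ≤ M ≤ B`) if and only if
`A` is essential in `B`. -/
theorem stmt_14 (R : Type*) [Ring R] (B : Type*) [AddCommGroup B] [Module Rᵐᵒᵖ B]
    (hB : IsNonsingularMod R B) (A : Submodule Rᵐᵒᵖ B) :
    (∀ M : Submodule Rᵐᵒᵖ B, A ≤ M →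
        ∀ f : (M ⧸ A.comap M.subtype) →ₗ[Rᵐᵒᵖ] B, f = 0) ↔
      IsEssentialSubmodule A := by
  constructor
  · intro hrational V hV
    obtain ⟨f, hf⟩ := Submodule.exists_quotient_sup_hom_apply_eq hV
    have hf0 := hrational (V ⊔ A) le_sup_right f
    exact eq_bot_iff.mpr fun v hv ↦ by simpa [hf0] using (hf v hv).symm
  · intro hA M _ f
    exact f.eq_zero_of_isSingularMod (isSingularMod_quotient (hA.comap M.subtype)) hB
end

section
/- Let R and S be rings and let F be an equivalence from the category of right R-modules to the category of right S-modules. If U is an essential submodule of a right R-module M and ι : U → M is the inclusion, then F(ι) is a monomorphism whose image is an essential submodule of F(M). -/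
open MulOpposite

/-!
Essentiality of a submodule is a property of its inclusion that can be phrased purely
categorically: a monomorphism `f` is essential when every `g` with `f ≫ g` mono is itself
mono, and in module categories this says exactly that the range of `f` is essential.
An equivalence preserves and reflects monomorphisms and is full and essentially surjective,
so it carries essential monomorphisms to essential monomorphisms.
-/

open CategoryTheory

namespace CategoryTheory

def IsEssentialMono {C : Type*} [Category C] {A M : C} (f : A ⟶ M) : Prop :=
  Mono f ∧ ∀ ⦃N : C⦄ (g : M ⟶ N), Mono (f ≫ g) → Mono g

theorem IsEssentialMono.map {C D : Type*} [Category C] [Category D] (F : C ⥤ D)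
    [F.IsEquivalence] {A M : C} {f : A ⟶ M} (hf : IsEssentialMono f) :
    IsEssentialMono (F.map f) := by
  have : Mono f := hf.1
  refine ⟨inferInstance, fun N g hfg => ?_⟩
  let e := F.objObjPreimageIso N
  obtain ⟨g', hg'⟩ := F.map_surjective (g ≫ e.inv)
  have hFfg' : Mono (F.map (f ≫ g')) := by
    rw [F.map_comp, hg', ← Category.assoc]; infer_instance
  have : Mono g' := hf.2 g' (F.mono_of_mono_map hFfg')
  have : Mono (g ≫ e.inv) := hg' ▸ inferInstance
  exact mono_of_mono g e.inv

end CategoryTheory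

namespace ModuleCat

theorem isEssentialMono_iff {T : Type u} [Ring T] {A M : ModuleCat.{u} T} (f : A ⟶ M) :
    IsEssentialMono f ↔
      Function.Injective f.hom ∧ IsEssentialSubmodule (LinearMap.range f.hom) := by
  simp only [IsEssentialMono, mono_iff_injective]
  refine and_congr_right fun hf => ⟨fun h V hV => ?_, fun h N g hfg => ?_⟩
  · have hinj : Function.Injective (f ≫ ModuleCat.ofHom V.mkQ).hom := by
      rw [← LinearMap.ker_eq_bot, eq_bot_iff]
      intro a ha
      have : f.hom a ∈ LinearMap.range f.hom ⊓ V :=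
        ⟨⟨a, rfl⟩, (Submodule.Quotient.mk_eq_zero V).1 ha⟩
      rw [hV, Submodule.mem_bot, ← map_zero f.hom] at this
      exact hf this
    simpa [← LinearMap.ker_eq_bot] using h (ModuleCat.ofHom V.mkQ) hinj
  · rw [← LinearMap.ker_eq_bot]
    refine h _ (eq_bot_iff.2 ?_)
    rintro x ⟨⟨a, rfl⟩, hx⟩
    have ha : a = 0 := hfg (a₂ := 0) (by simpa using hx)
    simp [ha]

end ModuleCat

/-- If `F` is an equivalence from right `R`-modules to right `S`-modules and `U` is an
essential submodule of a right `R`-module `M` with inclusion `ι : U → M`, then `F(ι)` is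
a monomorphism whose image is an essential submodule of `F(M)`. -/
theorem stmt_16 (R : Type u) (S : Type u) [Ring R] [Ring S]
    (F : ModuleCat.{u} Rᵐᵒᵖ ⥤ ModuleCat.{u} Sᵐᵒᵖ) [F.IsEquivalence]
    (M : ModuleCat.{u} Rᵐᵒᵖ) (U : Submodule Rᵐᵒᵖ M)
    (hU : IsEssentialSubmodule U) :
    Function.Injective (F.map (ModuleCat.ofHom U.subtype)).hom ∧
      IsEssentialSubmodule (LinearMap.range (F.map (ModuleCat.ofHom U.subtype)).hom) := by
  have hι : IsEssentialMono (ModuleCat.ofHom U.subtype) :=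
    (ModuleCat.isEssentialMono_iff _).2 ⟨U.injective_subtype, by simpa using hU⟩
  exact (ModuleCat.isEssentialMono_iff _).1 (hι.map F)
end
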